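/- arXiv:1507.05929 — 5 statements merged into one kernel-verified Lean document; each statement's English description precedes it below -/
import Mathlib

section
/- Fix r ∈ (0,1), λ ∈ (2r-1, 1) with λ > 0, and η > 0. For each m define ε_m := ε_m(λ,η,r). Then 1/sqrt(μ_m(λ - ε_m)·m) → 0 as m → ∞. -/
open MeasureTheory ProbabilityTheory Filter Topology

noncomputable section

/-- Centered bivariate Gaussian pair `(w, v)` in which `w` and `v` are each standard
normal and `E[w v] = lam`, realized as the law of `(z₁, lam·z₁ + √(1-lam²)·z₂)`
for independent standard normals `z₁, z₂`. -/
def gaussPair (lam : ℝ) : Measure (ℝ × ℝ) :=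
  Measure.map (fun z : ℝ × ℝ => (z.1, lam * z.1 + Real.sqrt (1 - lam ^ 2) * z.2))
    ((gaussianReal 0 1).prod (gaussianReal 0 1))

/-- `μ(λ,h) = P(w ≥ h ∧ v ≥ h)`. -/
def mu (lam h : ℝ) : ℝ := (gaussPair lam {p : ℝ × ℝ | h ≤ p.1 ∧ h ≤ p.2}).toReal

/-- `σ(λ,h) = sqrt(μ(λ,h)(1-μ(λ,h)))`. -/
def sigma' (lam h : ℝ) : ℝ := Real.sqrt (mu lam h * (1 - mu lam h))

/-- The threshold `h_m = sqrt(2 r log m)`. -/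
def hthr (r : ℝ) (m : ℕ) : ℝ := Real.sqrt (2 * r * Real.log m)

/-- `μ_m(λ) = μ(λ, h_m)`. -/
def muM (r : ℝ) (m : ℕ) (lam : ℝ) : ℝ := mu lam (hthr r m)

/-- `σ_m(λ) = σ(λ, h_m)`. -/
def sigM (r : ℝ) (m : ℕ) (lam : ℝ) : ℝ := sigma' lam (hthr r m)

/-- Canonical probability space carrying `m` i.i.d. random vectors in `ℝ^d`
whose coordinates are i.i.d. standard normal: `a_i ω := ω i`. -/
def Prob (d m : ℕ) : Measure (Fin m → Fin d → ℝ) :=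
  Measure.pi fun _ => Measure.pi fun _ : Fin d => gaussianReal 0 1

/-- Euclidean inner product on `ℝ^d`. -/
def dotp {d : ℕ} (a x : Fin d → ℝ) : ℝ := ∑ j, a j * x j

/-- `x` lies on the unit sphere `S^{d-1}`. -/
def unitVec {d : ℕ} (x : Fin d → ℝ) : Prop := ∑ j, x j ^ 2 = 1

/-- The score `S_m(x,y) = (1/m) ∑_i 1[⟨a_i,x⟩ ≥ h_m]·1[⟨a_i,y⟩ ≥ h_m]`. -/
def score (d m : ℕ) (r : ℝ) (x y : Fin d → ℝ) (ω : Fin m → Fin d → ℝ) : ℝ :=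
  (1 / (m : ℝ)) * ∑ i, (if hthr r m ≤ dotp (ω i) x then (1 : ℝ) else 0) *
    (if hthr r m ≤ dotp (ω i) y then (1 : ℝ) else 0)

/-- The standard normal cumulative distribution function `Φ`. -/
def Phi (t : ℝ) : ℝ := (gaussianReal 0 1 (Set.Iic t)).toReal

/-- The standard normal upper tail `P(N(0,1) ≥ t)`. -/
def gaussTail (t : ℝ) : ℝ := (gaussianReal 0 1 {z : ℝ | t ≤ z}).toReal

/-- `ε_m(λ,η,r) = C(λ,r,m,η)·m^{-(λ-(2r-1))/(2(1+λ))}` with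
`C = √(2π)·(1+λ)·(1-λ²)^{1/4}·η/√(2r log m)`. -/
def epsm (r lam eta : ℝ) (m : ℕ) : ℝ :=
  (Real.sqrt (2 * Real.pi) * (1 + lam) * (1 - lam ^ 2) ^ ((1 : ℝ) / 4) * eta /
    Real.sqrt (2 * r * Real.log m)) * (m : ℝ) ^ (-(lam - (2 * r - 1)) / (2 * (1 + lam)))

lemma mySqrtAtTop : Tendsto Real.sqrt atTop atTop := by
  rw [show Real.sqrt = fun x : ℝ => x ^ ((1:ℝ)/2) from funext fun x => Real.sqrt_eq_rpow x]
  exact tendsto_rpow_atTop (by norm_num)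

-- helper lemma 2: gaussian tail lower bound

lemma myTailLB {t : ℝ} (ht : 0 ≤ t) :
    Real.exp (-(t+1)^2/2) / Real.sqrt (2*Real.pi) ≤ (gaussianReal 0 1 {z : ℝ | t ≤ z}).toReal := by
  have hmono : gaussianReal 0 1 (Set.Icc t (t+1)) ≤ gaussianReal 0 1 {z : ℝ | t ≤ z} :=
    measure_mono (fun x hx => hx.1)
  have happ : gaussianReal 0 1 (Set.Icc t (t+1))
      = ENNReal.ofReal (∫ x in Set.Icc t (t+1), gaussianPDFReal 0 1 x) :=
    gaussianReal_apply_eq_integral 0 one_ne_zero _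
  have hint : Real.exp (-(t+1)^2/2) / Real.sqrt (2*Real.pi)
      ≤ ∫ x in Set.Icc t (t+1), gaussianPDFReal 0 1 x := by
    have hle : ∫ x in Set.Icc t (t+1), ((Real.sqrt (2*Real.pi))⁻¹ * Real.exp (-(t+1)^2/2))
        ≤ ∫ x in Set.Icc t (t+1), gaussianPDFReal 0 1 x := by
      apply setIntegral_mono_on
      · exact integrableOn_const (by simp [Real.volume_Icc])
      · exact (integrable_gaussianPDFReal 0 1).integrableOn
      · exact measurableSet_Icc
      · intro x hx
        simp only [gaussianPDFReal, NNReal.coe_one, mul_one, sub_zero]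
        have h1 : 0 ≤ x := le_trans ht hx.1
        have h2 : x ≤ t + 1 := hx.2
        refine mul_le_mul_of_nonneg_left (Real.exp_le_exp.2 ?_) (by positivity)
        nlinarith
    calc Real.exp (-(t+1)^2/2) / Real.sqrt (2*Real.pi)
        = ∫ x in Set.Icc t (t+1), ((Real.sqrt (2*Real.pi))⁻¹ * Real.exp (-(t+1)^2/2)) := by
          rw [setIntegral_const]
          simp [Real.volume_Icc, div_eq_inv_mul]
      _ ≤ _ := hle
  have h0 : 0 ≤ ∫ x in Set.Icc t (t+1), gaussianPDFReal 0 1 x :=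
    le_trans (by positivity) hint
  calc Real.exp (-(t+1)^2/2) / Real.sqrt (2*Real.pi)
      ≤ (gaussianReal 0 1 (Set.Icc t (t+1))).toReal := by
        rw [happ, ENNReal.toReal_ofReal h0]; exact hint
    _ ≤ _ := ENNReal.toReal_mono (measure_ne_top _ _) hmono


lemma myMuLB {lam h c : ℝ} (hl0 : 0 ≤ lam) (hh : 0 ≤ h) (hc : 0 ≤ c)
    (hkey : h ≤ lam * h + Real.sqrt (1 - lam ^ 2) * (c * h)) :
    (gaussianReal 0 1 {z : ℝ | h ≤ z}).toReal * (gaussianReal 0 1 {z : ℝ | c * h ≤ z}).toReal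
      ≤ mu lam h := by
  set f : ℝ × ℝ → ℝ × ℝ := fun z => (z.1, lam * z.1 + Real.sqrt (1 - lam ^ 2) * z.2) with hf
  have hfm : Measurable f :=
    measurable_fst.prodMk ((measurable_const.mul measurable_fst).add
      (measurable_const.mul measurable_snd))
  have hSm : MeasurableSet {p : ℝ × ℝ | h ≤ p.1 ∧ h ≤ p.2} := by
    have : {p : ℝ × ℝ | h ≤ p.1 ∧ h ≤ p.2} = Set.Ici h ×ˢ Set.Ici h := rfl
    rw [this]; exact measurableSet_Ici.prod measurableSet_Ici
  have hmap : gaussPair lam {p : ℝ × ℝ | h ≤ p.1 ∧ h ≤ p.2}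
      = ((gaussianReal 0 1).prod (gaussianReal 0 1)) (f ⁻¹' {p : ℝ × ℝ | h ≤ p.1 ∧ h ≤ p.2}) :=
    Measure.map_apply hfm hSm
  have hsub : ({z : ℝ | h ≤ z} ×ˢ {z : ℝ | c * h ≤ z})
      ⊆ f ⁻¹' {p : ℝ × ℝ | h ≤ p.1 ∧ h ≤ p.2} := by
    rintro ⟨z1, z2⟩ ⟨hz1, hz2⟩
    have hs : 0 ≤ Real.sqrt (1 - lam ^ 2) := Real.sqrt_nonneg _
    refine ⟨hz1, ?_⟩
    have h1 : lam * h ≤ lam * z1 := mul_le_mul_of_nonneg_left hz1 hl0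
    have h2 : Real.sqrt (1 - lam ^ 2) * (c * h) ≤ Real.sqrt (1 - lam ^ 2) * z2 :=
      mul_le_mul_of_nonneg_left hz2 hs
    calc h ≤ lam * h + Real.sqrt (1 - lam ^ 2) * (c * h) := hkey
      _ ≤ lam * z1 + Real.sqrt (1 - lam ^ 2) * z2 := add_le_add h1 h2
  have hprod : ((gaussianReal 0 1).prod (gaussianReal 0 1))
        ({z : ℝ | h ≤ z} ×ˢ {z : ℝ | c * h ≤ z})
      = gaussianReal 0 1 {z : ℝ | h ≤ z} * gaussianReal 0 1 {z : ℝ | c * h ≤ z} :=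
    Measure.prod_prod _ _
  have hmono : gaussianReal 0 1 {z : ℝ | h ≤ z} * gaussianReal 0 1 {z : ℝ | c * h ≤ z}
      ≤ gaussPair lam {p : ℝ × ℝ | h ≤ p.1 ∧ h ≤ p.2} := by
    rw [hmap, ← hprod]; exact measure_mono hsub
  have hfin : gaussPair lam {p : ℝ × ℝ | h ≤ p.1 ∧ h ≤ p.2} ≠ ⊤ := by
    have : IsProbabilityMeasure (gaussPair lam) :=
      Measure.isProbabilityMeasure_map hfm.aemeasurable
    exact measure_ne_top _ _
  have := ENNReal.toReal_mono hfin hmono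
  rwa [ENNReal.toReal_mul] at this

lemma myHthrTop {r : ℝ} (hr : 0 < r) : Tendsto (fun m : ℕ => Real.sqrt (2 * r * Real.log m)) atTop atTop := by
  have h1 : Tendsto (fun m : ℕ => Real.log m) atTop atTop :=
    Real.tendsto_log_atTop.comp tendsto_natCast_atTop_atTop
  have h2 : Tendsto (fun m : ℕ => 2 * r * Real.log m) atTop atTop :=
    h1.const_mul_atTop (by positivity)
  have hsq : Tendsto Real.sqrt atTop atTop := by
    rw [show Real.sqrt = fun x : ℝ => x ^ ((1:ℝ)/2) from funext fun x => Real.sqrt_eq_rpow x]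
    exact tendsto_rpow_atTop (by norm_num)
  exact hsq.comp h2

-- ε_m → 0

lemma myEpsTendsto {r lam eta : ℝ} (hr : 0 < r) (hlow : 2 * r - 1 < lam) (hlam1 : lam < 1)
    (hlam0 : 0 < lam) :
    Tendsto (fun m : ℕ => epsm r lam eta m) atTop (𝓝 0) := by
  have hβ : 0 < (lam - (2 * r - 1)) / (2 * (1 + lam)) := by
    apply div_pos <;> nlinarith
  have h1 : Tendsto (fun m : ℕ =>
      Real.sqrt (2 * Real.pi) * (1 + lam) * (1 - lam ^ 2) ^ ((1 : ℝ) / 4) * eta /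
        Real.sqrt (2 * r * Real.log m)) atTop (𝓝 0) :=
    Tendsto.div_atTop tendsto_const_nhds (myHthrTop hr)
  have h2 : Tendsto (fun m : ℕ => (m : ℝ) ^ (-(lam - (2 * r - 1)) / (2 * (1 + lam)))) atTop (𝓝 0) := by
    have h := (tendsto_rpow_neg_atTop hβ).comp (tendsto_natCast_atTop_atTop (R := ℝ))
    have heq : (fun m : ℕ => (m:ℝ) ^ (-(lam - (2*r-1)) / (2*(1+lam))))
        = fun m : ℕ => (m:ℝ) ^ (-((lam - (2*r-1)) / (2*(1+lam)))) := by
      funext m; rw [neg_div]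
    rw [heq]; exact h
  simpa only [mul_zero, epsm] using h1.mul h2

-- growth lemma: exp(δu - K√(2ru) - 1)/(2π) → ∞ along u → ∞

lemma myGrowth {r δ K : ℝ} (hr : 0 < r) (hδ : 0 < δ) (hK : 0 < K) :
    Tendsto (fun u : ℝ => Real.exp (δ * u - K * Real.sqrt (2 * r * u) - 1) / (2 * Real.pi))
      atTop atTop := by
  have hlin : Tendsto (fun u : ℝ => δ / 2 * u + (-1)) atTop atTop :=
    tendsto_atTop_add_const_right _ _ (tendsto_id.const_mul_atTop (by positivity))
  have hin : Tendsto (fun u : ℝ => δ * u - K * Real.sqrt (2 * r * u) - 1) atTop atTop := by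
    refine tendsto_atTop_mono' atTop ?_ hlin
    filter_upwards [eventually_ge_atTop (max 1 (8 * r * K ^ 2 / δ ^ 2))] with u hu
    have hu1 : (1:ℝ) ≤ u := le_trans (le_max_left _ _) hu
    have hu2 : 8 * r * K ^ 2 / δ ^ 2 ≤ u := le_trans (le_max_right _ _) hu
    have hu0 : 0 ≤ u := by linarith
    have hb : Real.sqrt (2 * r * u) ≤ δ / (2 * K) * u := by
      have h1 : 2 * r * u ≤ (δ / (2 * K) * u) ^ 2 := by
        have := (div_le_iff₀ (by positivity : (0:ℝ) < δ ^ 2)).mp hu2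
        have hKu : 0 < δ / (2 * K) * u ∨ True := Or.inr trivial
        field_simp
        nlinarith
      calc Real.sqrt (2 * r * u) ≤ Real.sqrt ((δ / (2 * K) * u) ^ 2) := Real.sqrt_le_sqrt h1
        _ = δ / (2 * K) * u := Real.sqrt_sq (by positivity)
    have : K * Real.sqrt (2 * r * u) ≤ δ / 2 * u := by
      have := mul_le_mul_of_nonneg_left hb hK.le
      calc K * Real.sqrt (2 * r * u) ≤ K * (δ / (2 * K) * u) := this
        _ = δ / 2 * u := by field_simp
    linarith
  exact (Real.tendsto_exp_atTop.comp hin).atTop_div_const (by positivity)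

/-- the Berry--Esseen error term vanishes asymptotically. -/
theorem stmt10 (r : ℝ) (hr : r ∈ Set.Ioo (0 : ℝ) 1)
    (lam : ℝ) (hlam : lam ∈ Set.Ioo (2 * r - 1) 1) (hlam0 : 0 < lam)
    (eta : ℝ) (heta : 0 < eta) :
    Tendsto (fun m : ℕ => 1 / Real.sqrt (muM r m (lam - epsm r lam eta m) * m))
      atTop (nhds 0) := by
  obtain ⟨hr0, hr1⟩ := hr
  obtain ⟨hlow, hlam1⟩ := hlam
  have h1lam : (0:ℝ) < 1 + lam := by linarith
  -- choose c with c0 < c and r * (1 + c^2) < 1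
  set c0 : ℝ := Real.sqrt ((1 - lam) / (1 + lam)) with hc0def
  have hc0sq : c0 ^ 2 = (1 - lam) / (1 + lam) :=
    Real.sq_sqrt (div_nonneg (by linarith) h1lam.le)
  have hH0 : r * (1 + c0 ^ 2) < 1 := by
    have he : 1 + c0 ^ 2 = 2 / (1 + lam) := by rw [hc0sq]; field_simp; norm_num
    rw [he, show r * (2 / (1 + lam)) = 2 * r / (1 + lam) by ring]
    exact (div_lt_one h1lam).mpr (by linarith)
  obtain ⟨c, hcH, hcgt⟩ : ∃ c : ℝ, r * (1 + c ^ 2) < 1 ∧ c0 < c := by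
    have hcont : Tendsto (fun x : ℝ => r * (1 + x ^ 2)) (𝓝[>] c0) (𝓝 (r * (1 + c0 ^ 2))) :=
      ((continuous_const.mul (continuous_const.add (continuous_pow 2))).tendsto c0).mono_left
        nhdsWithin_le_nhds
    have hev : ∀ᶠ x in 𝓝[>] c0, r * (1 + x ^ 2) < 1 := hcont.eventually (eventually_lt_nhds hH0)
    exact (hev.and self_mem_nhdsWithin).exists
  have hc0nn : (0:ℝ) ≤ c0 := Real.sqrt_nonneg _
  have hcpos : 0 < c := lt_of_le_of_lt hc0nn hcgt
  have hFlam : 1 < lam + Real.sqrt (1 - lam ^ 2) * c := by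
    have h1l2 : (0:ℝ) < 1 - lam ^ 2 := by nlinarith
    have hs : Real.sqrt (1 - lam ^ 2) * c0 = 1 - lam := by
      rw [hc0def, ← Real.sqrt_mul h1l2.le,
        show (1 - lam ^ 2) * ((1 - lam) / (1 + lam)) = (1 - lam) ^ 2 by field_simp; ring]
      exact Real.sqrt_sq (by linarith)
    have hsp : 0 < Real.sqrt (1 - lam ^ 2) := Real.sqrt_pos.2 h1l2
    nlinarith [mul_lt_mul_of_pos_left hcgt hsp]
  set δ : ℝ := 1 - r * (1 + c ^ 2) with hδdef
  have hδpos : 0 < δ := by simp only [hδdef]; linarith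
  -- epsilon tendsto and eventual facts
  have hε : Tendsto (fun m : ℕ => epsm r lam eta m) atTop (𝓝 0) :=
    myEpsTendsto hr0 hlow hlam1 hlam0
  have hε0 : ∀ m : ℕ, 0 ≤ epsm r lam eta m := by
    intro m
    have h1 : (0:ℝ) ≤ 1 - lam ^ 2 := by nlinarith
    exact mul_nonneg
      (div_nonneg (mul_nonneg (mul_nonneg (mul_nonneg (Real.sqrt_nonneg _) h1lam.le)
        (Real.rpow_nonneg h1 _)) heta.le) (Real.sqrt_nonneg _))
      (Real.rpow_nonneg (Nat.cast_nonneg m) _)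
  have hlamt : Tendsto (fun m : ℕ => lam - epsm r lam eta m) atTop (𝓝 lam) := by
    simpa using tendsto_const_nhds.sub hε
  have hevF : ∀ᶠ m : ℕ in atTop,
      1 < (lam - epsm r lam eta m) + Real.sqrt (1 - (lam - epsm r lam eta m) ^ 2) * c := by
    have hcont : Continuous fun x : ℝ => x + Real.sqrt (1 - x ^ 2) * c :=
      continuous_id.add (((continuous_const.sub (continuous_pow 2)).sqrt).mul continuous_const)
    exact ((hcont.tendsto lam).comp hlamt).eventually (eventually_gt_nhds hFlam)
  have hevpos : ∀ᶠ m : ℕ in atTop, epsm r lam eta m < lam :=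
    hε.eventually (eventually_lt_nhds hlam0)
  -- growth
  have hgrow : Tendsto (fun m : ℕ =>
      Real.exp (δ * Real.log m - (1 + c) * Real.sqrt (2 * r * Real.log m) - 1) / (2 * Real.pi))
      atTop atTop :=
    (myGrowth hr0 hδpos (by linarith : (0:ℝ) < 1 + c)).comp
      (Real.tendsto_log_atTop.comp (tendsto_natCast_atTop_atTop (R := ℝ)))
  -- main comparison
  have hmain : Tendsto (fun m : ℕ => muM r m (lam - epsm r lam eta m) * m) atTop atTop := by
    refine tendsto_atTop_mono' atTop ?_ hgrow
    filter_upwards [hevF, hevpos, eventually_ge_atTop 1] with m hF hεlam hm1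
    have hm0 : (0:ℝ) < m := by exact_mod_cast Nat.pos_of_ne_zero (by omega)
    have hm1' : (1:ℝ) ≤ m := by exact_mod_cast hm1
    have hLnn : 0 ≤ Real.log m := Real.log_nonneg hm1'
    set h := hthr r m with hhdef
    set lam' := lam - epsm r lam eta m with hl'def
    have hh0 : 0 ≤ h := Real.sqrt_nonneg _
    have hs2 : h ^ 2 = 2 * r * Real.log m := Real.sq_sqrt (by positivity)
    have hl0 : 0 ≤ lam' := by simp only [hl'def]; linarith
    have hkey : h ≤ lam' * h + Real.sqrt (1 - lam' ^ 2) * (c * h) := by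
      nlinarith [mul_le_mul_of_nonneg_left hF.le hh0]
    have step3 : (gaussianReal 0 1 {z : ℝ | h ≤ z}).toReal *
        (gaussianReal 0 1 {z : ℝ | c * h ≤ z}).toReal ≤ muM r m lam' :=
      myMuLB hl0 hh0 hcpos.le hkey
    have t1 := myTailLB hh0
    have t2 := myTailLB (mul_nonneg hcpos.le hh0)
    have hAB : Real.exp (-(h+1)^2/2) / Real.sqrt (2*Real.pi) *
        (Real.exp (-(c*h+1)^2/2) / Real.sqrt (2*Real.pi)) ≤
        (gaussianReal 0 1 {z : ℝ | h ≤ z}).toReal *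
        (gaussianReal 0 1 {z : ℝ | c * h ≤ z}).toReal :=
      mul_le_mul t1 t2 (by positivity) (le_trans (by positivity) t1)
    have key : Real.exp (-(h+1)^2/2) / Real.sqrt (2*Real.pi) *
        (Real.exp (-(c*h+1)^2/2) / Real.sqrt (2*Real.pi)) * m
        = Real.exp (δ * Real.log m - (1 + c) * h - 1) / (2 * Real.pi) := by
      nth_rewrite 1 [show (m:ℝ) = Real.exp (Real.log m) from (Real.exp_log hm0).symm]
      rw [div_mul_div_comm, Real.mul_self_sqrt (by positivity), div_mul_eq_mul_div,
        ← Real.exp_add, ← Real.exp_add]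
      congr 2
      rw [hδdef]
      linear_combination (-(1 + c ^ 2) / 2) * hs2
    calc Real.exp (δ * Real.log m - (1 + c) * h - 1) / (2 * Real.pi)
        = Real.exp (-(h+1)^2/2) / Real.sqrt (2*Real.pi) *
          (Real.exp (-(c*h+1)^2/2) / Real.sqrt (2*Real.pi)) * m := key.symm
      _ ≤ muM r m lam' * m :=
          mul_le_mul_of_nonneg_right (le_trans hAB step3) hm0.le
  have hsqrt : Tendsto (fun m : ℕ => Real.sqrt (muM r m (lam - epsm r lam eta m) * m))
      atTop atTop := mySqrtAtTop.comp hmain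
  have hfin := hsqrt.inv_tendsto_atTop
  simpa only [Pi.inv_def, Pi.inv_apply, one_div] using hfin


end
end

section
/- Fix λ ∈ (-1, 1). Then, as h → ∞, μ(λ,h) is asymptotically equivalent to ((1+λ)²/(2π·h²·sqrt(1-λ²)))·exp(-h²/(1+λ)); that is, the ratio of the two quantities tends to 1. -/
open MeasureTheory ProbabilityTheory Filter Topology

noncomputable section

set_option maxHeartbeats 1000000

namespace Stmt12Aux

open Real Set

def E (t : ℝ) : ℝ := ∫ y in Ioi t, Real.exp (-y^2/2)

lemma gauss_eq (y : ℝ) : Real.exp (-y^2/2) = Real.exp (-(1/2 : ℝ) * y^2) := by ring_nf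

lemma integrable_gauss : Integrable (fun y : ℝ => Real.exp (-y^2/2)) := by
  simpa [gauss_eq] using integrable_exp_neg_mul_sq (by norm_num : (0:ℝ) < 1/2)

lemma integrableOn_gauss (t : ℝ) : IntegrableOn (fun y : ℝ => Real.exp (-y^2/2)) (Ioi t) :=
  integrable_gauss.integrableOn

lemma E_nonneg (t : ℝ) : 0 ≤ E t :=
  setIntegral_nonneg measurableSet_Ioi (fun y _ => (Real.exp_pos _).le)

lemma E_antitone : Antitone E := by
  intro a b hab
  exact setIntegral_mono_set (integrableOn_gauss a)
    (Filter.Eventually.of_forall fun y => (Real.exp_pos _).le)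
    (HasSubset.Subset.eventuallyLE (Ioi_subset_Ioi hab))

lemma E_measurable : Measurable E := E_antitone.measurable

lemma E_le_total (t : ℝ) : E t ≤ Real.sqrt (2 * π) := by
  have h1 : E t ≤ ∫ y : ℝ, Real.exp (-y^2/2) :=
    setIntegral_le_integral integrable_gauss
      (Filter.Eventually.of_forall fun y => (Real.exp_pos _).le)
  have h2 : ∫ y : ℝ, Real.exp (-y^2/2) = Real.sqrt (2 * π) := by
    simp_rw [gauss_eq]
    rw [integral_gaussian]
    rw [show (2:ℝ)*π = π/(1/2) by ring]
  linarith

lemma integral_self_mul_gauss (t : ℝ) :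
    ∫ y in Ioi t, y * Real.exp (-y^2/2) = Real.exp (-t^2/2) := by
  have hderiv : ∀ y ∈ Ici t, HasDerivAt (fun y : ℝ => -Real.exp (-y^2/2))
      (y * Real.exp (-y^2/2)) y := by
    intro y _
    have h := ((hasDerivAt_id y).pow 2).neg.div_const 2
    have h2 := (h.exp).neg
    exact h2.congr_deriv (by simp; ring_nf)
  have hint : IntegrableOn (fun y => y * Real.exp (-y^2/2)) (Ioi t) := by
    have := integrable_mul_exp_neg_mul_sq (by norm_num : (0:ℝ) < 1/2)
    apply Integrable.integrableOn
    simpa [gauss_eq] using this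
  have htend : Tendsto (fun y : ℝ => -Real.exp (-y^2/2)) atTop (𝓝 0) := by
    rw [show (0:ℝ) = -0 by norm_num]
    apply Tendsto.neg
    apply Real.tendsto_exp_atBot.comp
    have h3 : Tendsto (fun y : ℝ => y^2/2) atTop atTop :=
      (tendsto_pow_atTop (by norm_num)).atTop_div_const (by norm_num)
    have := tendsto_neg_atBot_iff.mpr h3
    apply this.congr
    intro y; ring
  have := integral_Ioi_of_hasDerivAt_of_tendsto' hderiv hint htend
  rw [this]; ring


lemma E_le {t : ℝ} (ht : 0 < t) : E t ≤ Real.exp (-t^2/2) / t := by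
  have hint : IntegrableOn (fun y => y/t * Real.exp (-y^2/2)) (Ioi t) := by
    have : IntegrableOn (fun y => y * Real.exp (-y^2/2)) (Ioi t) := by
      have := integrable_mul_exp_neg_mul_sq (by norm_num : (0:ℝ) < 1/2)
      apply Integrable.integrableOn
      apply this.congr (Filter.Eventually.of_forall fun y => by dsimp only; ring_nf)
    apply IntegrableOn.congr_fun (this.const_mul t⁻¹) ?_ measurableSet_Ioi
    intro y _; dsimp only; ring
  have h1 : E t ≤ ∫ y in Ioi t, y/t * Real.exp (-y^2/2) := by
    apply setIntegral_mono_on (integrableOn_gauss t) hint measurableSet_Ioi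
    intro y hy
    have h2 : 1 ≤ y/t := (one_le_div ht).mpr (le_of_lt hy)
    nlinarith [Real.exp_pos (-y^2/2)]
  have h3 : ∫ y in Ioi t, y/t * Real.exp (-y^2/2) = Real.exp (-t^2/2) / t := by
    rw [show (fun y => y/t * Real.exp (-y^2/2)) = fun y => t⁻¹ * (y * Real.exp (-y^2/2)) by
      funext y; ring]
    rw [integral_const_mul, integral_self_mul_gauss]; ring
  calc E t ≤ _ := h1
  _ = _ := h3

lemma E_ge {t : ℝ} (ht : 0 < t) : t / (1 + t^2) * Real.exp (-t^2/2) ≤ E t := by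
  have hexp : Tendsto (fun y : ℝ => Real.exp (-y^2/2)) atTop (𝓝 0) := by
    apply Real.tendsto_exp_atBot.comp
    have h3 : Tendsto (fun y : ℝ => y^2/2) atTop atTop :=
      (tendsto_pow_atTop (by norm_num)).atTop_div_const (by norm_num)
    have := tendsto_neg_atBot_iff.mpr h3
    apply this.congr; intro y; ring
  -- integrability of pieces
  have hint2 : IntegrableOn (fun y => (y^2)⁻¹ * Real.exp (-y^2/2)) (Ioi t) := by
    apply Integrable.mono ((integrable_gauss.const_mul ((t^2)⁻¹)).integrableOn)
    · apply Measurable.aestronglyMeasurable; measurability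
    · filter_upwards [ae_restrict_mem measurableSet_Ioi] with y hy
      have hyt : t < y := hy
      have h0 : (0:ℝ) < y := ht.trans hyt
      rw [Real.norm_eq_abs, Real.norm_eq_abs, abs_of_nonneg, abs_of_nonneg]
      · apply mul_le_mul_of_nonneg_right _ (Real.exp_pos _).le
        rw [inv_le_inv₀ (by positivity) (by positivity)]
        nlinarith
      · positivity
      · positivity
  have hint1 : IntegrableOn (fun y => (1 + (y^2)⁻¹) * Real.exp (-y^2/2)) (Ioi t) := by
    have h := (integrableOn_gauss t).add hint2
    apply IntegrableOn.congr_fun h ?_ measurableSet_Ioi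
    intro y _; simp; ring
  -- FTC
  have key : ∫ y in Ioi t, (1 + (y^2)⁻¹) * Real.exp (-y^2/2) = Real.exp (-t^2/2) / t := by
    have hderiv : ∀ y ∈ Ici t, HasDerivAt (fun y : ℝ => -(Real.exp (-y^2/2) * y⁻¹))
        ((1 + (y^2)⁻¹) * Real.exp (-y^2/2)) y := by
      intro y hy
      have hy0 : y ≠ 0 := (ht.trans_le hy).ne'
      have h1 : HasDerivAt (fun y : ℝ => Real.exp (-y^2/2)) (Real.exp (-y^2/2) * (-y)) y := by
        have h := (((hasDerivAt_id y).pow 2).neg.div_const 2).exp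
        convert h using 1 <;> simp <;> ring_nf
      have h2 := (h1.mul (hasDerivAt_inv hy0)).neg
      exact h2.congr_deriv (by field_simp; ring)
    have htend : Tendsto (fun y : ℝ => -(Real.exp (-y^2/2) * y⁻¹)) atTop (𝓝 0) := by
      rw [show (0:ℝ) = -(0*0) by norm_num]
      exact (hexp.mul tendsto_inv_atTop_zero).neg
    have := integral_Ioi_of_hasDerivAt_of_tendsto' hderiv hint1 htend
    rw [this]
    field_simp
    ring
  have hsplit : ∫ y in Ioi t, (1 + (y^2)⁻¹) * Real.exp (-y^2/2)
      = E t + ∫ y in Ioi t, (y^2)⁻¹ * Real.exp (-y^2/2) := by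
    rw [show (fun y => (1 + (y^2)⁻¹) * Real.exp (-y^2/2))
        = fun y => Real.exp (-y^2/2) + (y^2)⁻¹ * Real.exp (-y^2/2) by funext y; ring]
    exact integral_add (integrableOn_gauss t) hint2
  have hbound : ∫ y in Ioi t, (y^2)⁻¹ * Real.exp (-y^2/2) ≤ (t^2)⁻¹ * E t := by
    have h1 : ∫ y in Ioi t, (y^2)⁻¹ * Real.exp (-y^2/2)
        ≤ ∫ y in Ioi t, (t^2)⁻¹ * Real.exp (-y^2/2) := by
      apply setIntegral_mono_on hint2 ((integrableOn_gauss t).const_mul _) measurableSet_Ioi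
      intro y hy
      have hyt : t < y := hy
      apply mul_le_mul_of_nonneg_right _ (Real.exp_pos _).le
      rw [inv_le_inv₀ (by nlinarith) (by positivity)]
      nlinarith
    rw [integral_const_mul] at h1
    exact h1
  have hE : Real.exp (-t^2/2) / t ≤ E t + (t^2)⁻¹ * E t := by
    rw [← key, hsplit]; linarith
  have ht2 : (0:ℝ) < t^2 := by positivity
  rw [div_le_iff₀ ht] at hE
  rw [div_mul_eq_mul_div, div_le_iff₀ (by positivity)]
  have hEn := E_nonneg t
  have h2 : E t + (t^2)⁻¹ * E t = E t * (1 + t^2) / t^2 := by field_simp; ring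
  rw [h2] at hE
  rw [div_mul_eq_mul_div, le_div_iff₀ ht2] at hE
  nlinarith [Real.exp_pos (-t^2/2)]

lemma mills : Tendsto (fun t => E t * t * Real.exp (t^2/2)) atTop (𝓝 1) := by
  have hlow : Tendsto (fun t : ℝ => t^2 / (1 + t^2)) atTop (𝓝 1) := by
    have h1 : Tendsto (fun t : ℝ => 1 + (t^2)⁻¹) atTop (𝓝 (1 + 0)) := by
      apply tendsto_const_nhds.add
      exact tendsto_inv_atTop_zero.comp (tendsto_pow_atTop two_ne_zero)
    have h2 := h1.inv₀ (by norm_num)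
    rw [show ((1:ℝ)+0)⁻¹ = 1 by norm_num] at h2
    apply h2.congr'
    filter_upwards [eventually_gt_atTop 0] with t ht
    field_simp
    ring
  apply tendsto_of_tendsto_of_tendsto_of_le_of_le' hlow tendsto_const_nhds
  · filter_upwards [eventually_gt_atTop 0] with t ht
    have := E_ge ht
    have he : Real.exp (-t^2/2) * Real.exp (t^2/2) = 1 := by
      rw [← Real.exp_add]; ring_nf; exact Real.exp_zero
    calc t^2/(1+t^2) = (t/(1+t^2) * Real.exp (-t^2/2)) * t * Real.exp (t^2/2) := by
          rw [show -t^2/2 = -(t^2/2) by ring, Real.exp_neg]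
          field_simp
    _ ≤ E t * t * Real.exp (t^2/2) := by
          apply mul_le_mul_of_nonneg_right _ (Real.exp_pos _).le
          exact mul_le_mul_of_nonneg_right this ht.le
  · filter_upwards [eventually_gt_atTop 0] with t ht
    have := E_le ht
    have he : Real.exp (-t^2/2) * Real.exp (t^2/2) = 1 := by
      rw [← Real.exp_add]; ring_nf; exact Real.exp_zero
    calc E t * t * Real.exp (t^2/2) ≤ (Real.exp (-t^2/2)/t) * t * Real.exp (t^2/2) := by
          apply mul_le_mul_of_nonneg_right _ (Real.exp_pos _).le
          exact mul_le_mul_of_nonneg_right this ht.le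
    _ = 1 := by
          rw [show -t^2/2 = -(t^2/2) by ring, Real.exp_neg]
          field_simp


/-- density of the upper tail of the std gaussian -/
lemma gauss_Ici (a : ℝ) :
    gaussianReal 0 1 (Ici a) = ENNReal.ofReal ((Real.sqrt (2*π))⁻¹ * E a) := by
  rw [gaussianReal_apply_eq_integral 0 one_ne_zero (Ici a)]
  congr 1
  rw [integral_Ici_eq_integral_Ioi]
  have : ∀ x : ℝ, gaussianPDFReal 0 1 x = (Real.sqrt (2*π))⁻¹ * Real.exp (-x^2/2) := by
    intro x
    simp [gaussianPDFReal]
  simp_rw [this]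
  rw [integral_const_mul]
  rfl

lemma mu_eq_integral (lam : ℝ) (hlam : lam ∈ Set.Ioo (-1 : ℝ) 1) (h : ℝ) :
    mu lam h = ∫ x in Ioi h,
      (Real.sqrt (2*π))⁻¹ * Real.exp (-x^2/2) *
        ((Real.sqrt (2*π))⁻¹ * E ((h - lam*x) / Real.sqrt (1-lam^2))) := by
  obtain ⟨hl1, hl2⟩ := hlam
  set s : ℝ := Real.sqrt (1 - lam^2) with hs_def
  have hs : 0 < s := Real.sqrt_pos.mpr (by nlinarith)
  set γ := gaussianReal 0 1 with hγ
  have hT : Measurable (fun z : ℝ × ℝ => (z.1, lam * z.1 + s * z.2)) := by fun_prop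
  have hSet : MeasurableSet {p : ℝ × ℝ | h ≤ p.1 ∧ h ≤ p.2} := by
    have : {p : ℝ × ℝ | h ≤ p.1 ∧ h ≤ p.2}
        = {p : ℝ × ℝ | h ≤ p.1} ∩ {p : ℝ × ℝ | h ≤ p.2} := rfl
    rw [this]
    exact (measurableSet_le measurable_const measurable_fst).inter
      (measurableSet_le measurable_const measurable_snd)
  have hPre : MeasurableSet {z : ℝ × ℝ | h ≤ z.1 ∧ h ≤ lam * z.1 + s * z.2} := by
    have : {z : ℝ × ℝ | h ≤ z.1 ∧ h ≤ lam * z.1 + s * z.2}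
        = {z : ℝ × ℝ | h ≤ z.1} ∩ {z : ℝ × ℝ | h ≤ lam * z.1 + s * z.2} := rfl
    rw [this]
    exact (measurableSet_le measurable_const measurable_fst).inter
      (measurableSet_le measurable_const (by fun_prop))
  have step1 : gaussPair lam {p : ℝ × ℝ | h ≤ p.1 ∧ h ≤ p.2}
      = (γ.prod γ) {z : ℝ × ℝ | h ≤ z.1 ∧ h ≤ lam * z.1 + s * z.2} := by
    rw [gaussPair, Measure.map_apply hT hSet]
    rfl
  have step2 : (γ.prod γ) {z : ℝ × ℝ | h ≤ z.1 ∧ h ≤ lam * z.1 + s * z.2}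
      = ∫⁻ x in Ici h, γ (Ici ((h - lam*x)/s)) ∂γ := by
    rw [Measure.prod_apply hPre]
    rw [← lintegral_indicator measurableSet_Ici]
    congr 1
    funext x
    by_cases hx : h ≤ x
    · rw [indicator_of_mem (mem_Ici.mpr hx)]
      congr 1
      ext y
      simp only [mem_preimage, mem_setOf_eq, mem_Ici, hx, true_and]
      rw [div_le_iff₀ hs]
      constructor <;> intro hy <;> nlinarith
    · rw [indicator_of_notMem (by simpa using hx)]
      convert measure_empty (μ := γ)
      ext y
      simp only [mem_preimage, mem_setOf_eq, hx, false_and, mem_empty_iff_false]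
  have step3 : ∫⁻ x in Ici h, γ (Ici ((h - lam*x)/s)) ∂γ
      = ∫⁻ x in Ici h, ENNReal.ofReal ((Real.sqrt (2*π))⁻¹ * Real.exp (-x^2/2) *
          ((Real.sqrt (2*π))⁻¹ * E ((h - lam*x)/s))) := by
    have hmeasE : Measurable (fun x : ℝ =>
        ENNReal.ofReal ((Real.sqrt (2*π))⁻¹ * E ((h - lam*x)/s))) := by
      apply ENNReal.measurable_ofReal.comp
      apply Measurable.const_mul
      exact E_measurable.comp (by fun_prop)
    calc ∫⁻ x in Ici h, γ (Ici ((h - lam*x)/s)) ∂γ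
        = ∫⁻ x in Ici h,
            ENNReal.ofReal ((Real.sqrt (2*π))⁻¹ * E ((h - lam*x)/s)) ∂γ := by
          congr 1
          funext x
          rw [hγ, gauss_Ici]
      _ = ∫⁻ x in Ici h, ENNReal.ofReal ((Real.sqrt (2*π))⁻¹ * Real.exp (-x^2/2) *
            ((Real.sqrt (2*π))⁻¹ * E ((h - lam*x)/s))) := by
          rw [hγ, gaussianReal_of_var_ne_zero 0 one_ne_zero]
          rw [setLIntegral_withDensity_eq_setLIntegral_mul _ (measurable_gaussianPDF 0 1)
            hmeasE measurableSet_Ici]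
          congr 1
          funext x
          simp only [Pi.mul_apply]
          rw [gaussianPDF]
          rw [← ENNReal.ofReal_mul (gaussianPDFReal_nonneg 0 1 x)]
          congr 1
          have hpdf : gaussianPDFReal 0 1 x = (Real.sqrt (2*π))⁻¹ * Real.exp (-x^2/2) := by
            simp [gaussianPDFReal]
          rw [hpdf]
  have hfm : AEStronglyMeasurable (fun x => (Real.sqrt (2*π))⁻¹ * Real.exp (-x^2/2) *
      ((Real.sqrt (2*π))⁻¹ * E ((h - lam*x)/s))) (volume.restrict (Ici h)) := by
    apply Measurable.aestronglyMeasurable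
    apply Measurable.mul (by fun_prop)
    apply Measurable.const_mul
    exact E_measurable.comp (by fun_prop)
  have step4 : ∫ x in Ici h, (Real.sqrt (2*π))⁻¹ * Real.exp (-x^2/2) *
        ((Real.sqrt (2*π))⁻¹ * E ((h - lam*x)/s))
      = ((∫⁻ x in Ici h, ENNReal.ofReal ((Real.sqrt (2*π))⁻¹ * Real.exp (-x^2/2) *
          ((Real.sqrt (2*π))⁻¹ * E ((h - lam*x)/s))))).toReal := by
    apply integral_eq_lintegral_of_nonneg_ae
    · apply Filter.Eventually.of_forall
      intro x
      have h1 : 0 ≤ (Real.sqrt (2*π))⁻¹ := by positivity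
      have := E_nonneg ((h - lam*x)/s)
      positivity
    · exact hfm
  rw [mu, step1, step2, step3, ← step4, integral_Ici_eq_integral_Ioi]


lemma integral_Ioi_shift (f : ℝ → ℝ) (h : ℝ) :
    ∫ x in Ioi h, f x = ∫ y in Ioi (0:ℝ), f (h + y) := by
  have h1 : ∫ y in Ioi (0:ℝ), f (h + y)
      = ∫ y, (Ioi (0:ℝ)).indicator (fun y => f (h + y)) y := by
    rw [integral_indicator measurableSet_Ioi]
  have h2 : ∀ y : ℝ, (Ioi (0:ℝ)).indicator (fun y => f (h + y)) y
      = (Ioi h).indicator f (h + y) := by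
    intro y
    by_cases hy : 0 < y
    · rw [indicator_of_mem (mem_Ioi.mpr hy), indicator_of_mem (by simp [mem_Ioi]; linarith)]
    · rw [indicator_of_notMem (by simpa using hy),
        indicator_of_notMem (by simp [mem_Ioi]; linarith [not_lt.mp hy])]
  rw [h1]
  simp_rw [h2]
  rw [integral_add_left_eq_self (fun x => (Ioi h).indicator f x) h]
  rw [integral_indicator measurableSet_Ioi]

lemma integral_Ioi_subst (f : ℝ → ℝ) {h : ℝ} (hh : 0 < h) :
    ∫ x in Ioi h, f x = h⁻¹ * ∫ u in Ioi (0:ℝ), f (h + u/h) := by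
  rw [integral_Ioi_shift f h]
  have := integral_comp_mul_right_Ioi (fun y => f (h + y)) 0 (inv_pos.mpr hh)
  simp only [zero_mul, smul_eq_mul, inv_inv] at this
  have heq : ∀ u : ℝ, f (h + u * h⁻¹) = f (h + u/h) := by intro u; rw [div_eq_mul_inv]
  simp_rw [heq] at this
  rw [this]
  rw [← mul_assoc, inv_mul_cancel₀ hh.ne', one_mul]


def tfun (lam h u : ℝ) : ℝ := (h - lam*(h+u/h)) / Real.sqrt (1-lam^2)

def W (lam h u : ℝ) : ℝ :=
  Real.exp (-(h+u/h)^2/2) * E (tfun lam h u)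
    * (h * Real.sqrt (1-lam^2) / (1+lam)^2) * Real.exp (h^2/(1+lam))

variable {lam : ℝ} (hl1 : -1 < lam) (hl2 : lam < 1)

include hl1 hl2

lemma hs2 : (Real.sqrt (1-lam^2))^2 = 1 - lam^2 :=
  Real.sq_sqrt (by nlinarith)

lemma hs_pos : 0 < Real.sqrt (1-lam^2) := Real.sqrt_pos.mpr (by nlinarith)

lemma hA_pos : (0:ℝ) < 1 + lam := by linarith

omit hl1 hl2 in
lemma W_nonneg {h : ℝ} (hh : 0 ≤ h) (u : ℝ) : 0 ≤ W lam h u := by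
  rw [W]
  have h1 : (0:ℝ) ≤ h * Real.sqrt (1-lam^2) / (1+lam)^2 := by positivity
  have h2 := E_nonneg (tfun lam h u)
  positivity

lemma exp_identity {h : ℝ} (hh : h ≠ 0) (u : ℝ) :
    Real.exp (-(h+u/h)^2/2) * Real.exp (h^2/(1+lam))
      = Real.exp ((tfun lam h u)^2/2)
        * Real.exp (-u/(1+lam) - u^2/(2*(1-lam^2)*h^2)) := by
  rw [← Real.exp_add, ← Real.exp_add]
  congr 1
  have ht2 : (tfun lam h u)^2 = (h - lam*(h+u/h))^2 / (1-lam^2) := by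
    rw [tfun, div_pow, hs2 hl1 hl2]
  rw [ht2]
  have hA : (1:ℝ) + lam ≠ 0 := (hA_pos hl1 hl2).ne'
  have hB : (1:ℝ) - lam ≠ 0 := by intro hc; nlinarith
  have hC : (1:ℝ) - lam^2 ≠ 0 := by intro hc; nlinarith
  field_simp
  ring

lemma W_eq {h : ℝ} (hh : h ≠ 0) (u : ℝ) :
    W lam h u = E (tfun lam h u) * (h * Real.sqrt (1-lam^2) / (1+lam)^2)
      * (Real.exp ((tfun lam h u)^2/2)
        * Real.exp (-u/(1+lam) - u^2/(2*(1-lam^2)*h^2))) := by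
  have h1 := exp_identity hl1 hl2 hh u
  calc W lam h u = (Real.exp (-(h+u/h)^2/2) * Real.exp (h^2/(1+lam)))
      * (E (tfun lam h u) * (h * Real.sqrt (1-lam^2) / (1+lam)^2)) := by rw [W]; ring
  _ = _ := by rw [h1]; ring

lemma tfun_eventually_eq (u : ℝ) :
    ∀ h : ℝ, h ≠ 0 → tfun lam h u
      = ((1-lam)/Real.sqrt (1-lam^2)) * h + (-(lam*u)/Real.sqrt (1-lam^2)) * h⁻¹ := by
  intro h hh
  have hs := (hs_pos hl1 hl2).ne'
  rw [tfun]
  field_simp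
  ring

lemma tfun_tendsto (u : ℝ) : Tendsto (fun h => tfun lam h u) atTop atTop := by
  set s := Real.sqrt (1-lam^2) with hs_def
  have hs := hs_pos hl1 hl2
  have hc : (0:ℝ) < (1-lam)/s := by
    apply div_pos (by linarith) hs
  have h1 : Tendsto (fun h : ℝ => ((1-lam)/s) * h) atTop atTop :=
    Tendsto.const_mul_atTop hc tendsto_id
  have hmain : Tendsto (fun h : ℝ => ((1-lam)/s) * h + (-(lam*u)/s) * h⁻¹) atTop atTop := by
    apply tendsto_atTop_add_right_of_le' atTop (-(|lam*u|/s)) h1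
    filter_upwards [eventually_ge_atTop (1:ℝ)] with h hh
    have h0 : (0:ℝ) < h := lt_of_lt_of_le one_pos hh
    have hinv0 : (0:ℝ) ≤ h⁻¹ := by positivity
    have hinv : h⁻¹ ≤ 1 := by
      rw [inv_le_one_iff₀]; right; exact hh
    have habs : |(-(lam*u)/s) * h⁻¹| ≤ |lam*u|/s := by
      rw [abs_mul, abs_div, abs_neg, abs_of_pos hs, abs_of_nonneg hinv0]
      calc |lam*u|/s * h⁻¹ ≤ |lam*u|/s * 1 := by
            apply mul_le_mul_of_nonneg_left hinv (by positivity)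
      _ = |lam*u|/s := mul_one _
    linarith [neg_abs_le ((-(lam*u)/s) * h⁻¹)]
  apply hmain.congr'
  filter_upwards [eventually_ge_atTop (1:ℝ)] with h hh
  exact (tfun_eventually_eq hl1 hl2 u h (by linarith)).symm

lemma tfun_div_tendsto (u : ℝ) :
    Tendsto (fun h => tfun lam h u / h) atTop (𝓝 ((1-lam)/Real.sqrt (1-lam^2))) := by
  set s := Real.sqrt (1-lam^2) with hs_def
  have hs := hs_pos hl1 hl2
  have h0 : Tendsto (fun h : ℝ => (1-lam)/s + (-(lam*u)/s) * (h⁻¹ * h⁻¹)) atTop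
      (𝓝 ((1-lam)/s + (-(lam*u)/s) * (0 * 0))) := by
    apply tendsto_const_nhds.add
    exact (Tendsto.const_mul _ (tendsto_inv_atTop_zero.mul tendsto_inv_atTop_zero))
  simp only [mul_zero, zero_mul, add_zero] at h0
  apply h0.congr'
  filter_upwards [eventually_ge_atTop (1:ℝ)] with h hh
  have hne : h ≠ 0 := by intro hc; rw [hc] at hh; linarith
  rw [tfun_eventually_eq hl1 hl2 u h hne, ← hs_def]
  have hs' : s ≠ 0 := hs.ne'
  field_simp

lemma W_tendsto (u : ℝ) :
    Tendsto (fun h => W lam h u) atTop (𝓝 (Real.exp (-u/(1+lam)) / (1+lam))) := by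
  set s := Real.sqrt (1-lam^2) with hs_def
  have hs := hs_pos hl1 hl2
  have hA := hA_pos hl1 hl2
  have hslope : (0:ℝ) < (1-lam)/s := div_pos (by linarith) hs
  -- Factor 1 : Mills ratio
  have hF1 : Tendsto (fun h => E (tfun lam h u) * tfun lam h u
      * Real.exp ((tfun lam h u)^2/2)) atTop (𝓝 1) :=
    mills.comp (tfun_tendsto hl1 hl2 u)
  -- Factor 2
  have hF2 : Tendsto (fun h => h * s / ((1+lam)^2 * tfun lam h u)) atTop
      (𝓝 (1/(1+lam))) := by
    have hbase := ((tfun_div_tendsto hl1 hl2 u).inv₀ hslope.ne').const_mul (s/(1+lam)^2)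
    have hval : s/(1+lam)^2 * ((1-lam)/s)⁻¹ = 1/(1+lam) := by
      rw [inv_div]
      rw [div_mul_div_comm]
      rw [show s * s = s^2 by ring, hs2 hl1 hl2]
      have h1 : (1:ℝ) - lam ≠ 0 := by intro hc; nlinarith
      field_simp
      ring
    rw [hval] at hbase
    apply hbase.congr'
    filter_upwards [(tfun_tendsto hl1 hl2 u).eventually_gt_atTop 0,
      eventually_gt_atTop (0:ℝ)] with h ht hh
    rw [inv_div]
    field_simp
  -- Factor 3
  have hF3 : Tendsto (fun h => Real.exp (-u/(1+lam) - u^2/(2*(1-lam^2)*h^2))) atTop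
      (𝓝 (Real.exp (-u/(1+lam)))) := by
    have hinner : Tendsto (fun h : ℝ => -u/(1+lam) + (-(u^2/(2*(1-lam^2)))) * (h⁻¹ * h⁻¹))
        atTop (𝓝 (-u/(1+lam) + (-(u^2/(2*(1-lam^2)))) * (0*0))) := by
      apply tendsto_const_nhds.add
      exact Tendsto.const_mul _ (tendsto_inv_atTop_zero.mul tendsto_inv_atTop_zero)
    simp only [mul_zero, zero_mul, add_zero] at hinner
    have := (Real.continuous_exp.tendsto _).comp hinner
    apply this.congr'
    filter_upwards [eventually_ge_atTop (1:ℝ)] with h hh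
    have hne : h ≠ 0 := by intro hc; rw [hc] at hh; linarith
    have hC : (1:ℝ) - lam^2 ≠ 0 := by intro hc; nlinarith
    simp only [Function.comp_apply]
    congr 1
    field_simp
    ring
  have hprod := (hF1.mul hF2).mul hF3
  rw [show (1 * (1/(1+lam))) * Real.exp (-u/(1+lam))
      = Real.exp (-u/(1+lam)) / (1+lam) by ring] at hprod
  apply hprod.congr'
  filter_upwards [(tfun_tendsto hl1 hl2 u).eventually_gt_atTop 0,
    eventually_gt_atTop (0:ℝ)] with h ht hh
  rw [W_eq hl1 hl2 hh.ne' u]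
  field_simp
  ring


lemma W_bound : ∃ h₀ : ℝ, 1 ≤ h₀ ∧ ∀ h : ℝ, h₀ ≤ h → ∀ u : ℝ, 0 < u →
    W lam h u ≤ (2/(1+lam)) * Real.exp (-u/(1+lam))
      + (Real.sqrt (2*π) * Real.sqrt (1-lam^2)/(1+lam)^2) * Real.exp (-u/2) := by
  set s := Real.sqrt (1-lam^2) with hs_def
  have hs := hs_pos hl1 hl2
  have hA := hA_pos hl1 hl2
  have hsq : s^2 = 1 - lam^2 := hs2 hl1 hl2
  -- choose h₀
  set c : ℝ := 1/(1+lam) - 1/2 - (1-lam)/(4*lam) with hc_def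
  have hmain : ∀ h : ℝ, 1 ≤ h → (0 < lam → h * Real.exp (c*h^2) ≤ 1) → ∀ u : ℝ, 0 < u →
      W lam h u ≤ (2/(1+lam)) * Real.exp (-u/(1+lam))
        + (Real.sqrt (2*π) * s/(1+lam)^2) * Real.exp (-u/2) := by
    intro h hh1 hch u hu
    have hh0 : (0:ℝ) < h := lt_of_lt_of_le one_pos hh1
    set t : ℝ := tfun lam h u with ht_def
    have hterm1 : (0:ℝ) ≤ (2/(1+lam)) * Real.exp (-u/(1+lam)) := by positivity
    have hterm2 : (0:ℝ) ≤ (Real.sqrt (2*π) * s/(1+lam)^2) * Real.exp (-u/2) := by positivity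
    by_cases hcase : (1-lam)*h/(2*s) ≤ t
    · -- main region
      have htpos : 0 < t := lt_of_lt_of_le (div_pos (by nlinarith) (by positivity)) hcase
      have hW := W_eq hl1 hl2 hh0.ne' u
      rw [← ht_def] at hW
      have hEt := E_le htpos
      have step1 : W lam h u ≤ (Real.exp (-t^2/2)/t) * (h * s / (1+lam)^2)
          * (Real.exp (t^2/2) * Real.exp (-u/(1+lam) - u^2/(2*(1-lam^2)*h^2))) := by
        rw [hW]
        apply mul_le_mul_of_nonneg_right _ (by positivity)
        exact mul_le_mul_of_nonneg_right hEt (by positivity)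
      have step2 : (Real.exp (-t^2/2)/t) * (h * s / (1+lam)^2)
          * (Real.exp (t^2/2) * Real.exp (-u/(1+lam) - u^2/(2*(1-lam^2)*h^2)))
          = (h * s / ((1+lam)^2 * t)) * Real.exp (-u/(1+lam) - u^2/(2*(1-lam^2)*h^2)) := by
        rw [show -t^2/2 = -(t^2/2) by ring, Real.exp_neg]
        field_simp
      have step3 : Real.exp (-u/(1+lam) - u^2/(2*(1-lam^2)*h^2)) ≤ Real.exp (-u/(1+lam)) := by
        apply Real.exp_le_exp.mpr
        have : (0:ℝ) ≤ u^2/(2*(1-lam^2)*h^2) := by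
          have : (0:ℝ) < 1 - lam^2 := by nlinarith
          positivity
        linarith
      have step4 : h * s / ((1+lam)^2 * t) ≤ 2/(1+lam) := by
        rw [div_le_div_iff₀ (mul_pos (by positivity) htpos) hA]
        have h1 : (1-lam)*h/(2*s) * (2*s) ≤ t * (2*s) :=
          mul_le_mul_of_nonneg_right hcase (by positivity)
        rw [div_mul_cancel₀ _ (by positivity : (2:ℝ)*s ≠ 0)] at h1
        have h2 : (h*s)*s ≤ (2*(t*(1+lam)))*s := by nlinarith [mul_le_mul_of_nonneg_right h1 hA.le]
        have h3 : h*s ≤ 2*(t*(1+lam)) := le_of_mul_le_mul_right h2 hs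
        nlinarith [h3, hA]
      calc W lam h u ≤ (h * s / ((1+lam)^2 * t))
            * Real.exp (-u/(1+lam) - u^2/(2*(1-lam^2)*h^2)) := by rw [← step2]; exact step1
      _ ≤ (2/(1+lam)) * Real.exp (-u/(1+lam)) := by
          apply mul_le_mul step4 step3 (Real.exp_pos _).le (by positivity)
      _ ≤ _ := le_add_of_nonneg_right hterm2
    · -- tail region
      push_neg at hcase
      -- extract lam > 0 and u > (1-lam)*h^2/(2*lam)
      have hkey : (1-lam)*h/2 < lam*u/h := by
        have : t * s = (1-lam)*h - lam*u/h := by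
          rw [ht_def, tfun]
          field_simp
          ring
        have h2 : t*s < (1-lam)*h/(2*s)*s := by
          apply mul_lt_mul_of_pos_right hcase hs
        have h4 : (1-lam)*h/(2*s)*s = (1-lam)*h/2 := by
          have hs' : s ≠ 0 := hs.ne'
          field_simp
        rw [this, h4] at h2
        linarith
      have hlam_pos : 0 < lam := by
        by_contra hl
        push_neg at hl
        have h1 : lam*u/h ≤ 0 := by
          apply div_nonpos_of_nonpos_of_nonneg _ hh0.le
          exact mul_nonpos_of_nonpos_of_nonneg hl hu.le
        nlinarith
      have hukey : (1-lam)*h^2/(2*lam) < u := by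
        rw [div_lt_iff₀ (by positivity)] at hkey ⊢
        rw [div_mul_eq_mul_div, lt_div_iff₀ hh0] at hkey
        nlinarith
      have hche := hch hlam_pos
      -- W ≤ √(2π) * (h*s/A²) * exp(h²/A - h²/2 - u)
      have hx2 : (h + u/h)^2 = h^2 + 2*u + (u/h)^2 := by
        field_simp
        ring
      have step1 : W lam h u ≤ Real.sqrt (2*π) * (h * s / (1+lam)^2)
          * Real.exp (h^2/(1+lam) - (h^2/2 + u)) := by
        rw [W, ← ht_def]
        have e1 : Real.exp (-(h+u/h)^2/2) ≤ Real.exp (-(h^2/2 + u)) := by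
          apply Real.exp_le_exp.mpr
          rw [hx2]
          nlinarith [sq_nonneg (u/h)]
        calc Real.exp (-(h+u/h)^2/2) * E t * (h * s / (1+lam)^2) * Real.exp (h^2/(1+lam))
            ≤ Real.exp (-(h^2/2 + u)) * Real.sqrt (2*π) * (h * s / (1+lam)^2)
              * Real.exp (h^2/(1+lam)) := by
              apply mul_le_mul_of_nonneg_right _ (Real.exp_pos _).le
              apply mul_le_mul_of_nonneg_right _ (by positivity)
              exact mul_le_mul e1 (E_le_total t) (E_nonneg t) (Real.exp_pos _).le
        _ = Real.sqrt (2*π) * (h * s / (1+lam)^2) * Real.exp (h^2/(1+lam) - (h^2/2 + u)) := by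
              rw [show h^2/(1+lam) - (h^2/2 + u) = -(h^2/2 + u) + h^2/(1+lam) by ring,
                Real.exp_add]
              ring
      have step2 : Real.exp (h^2/(1+lam) - (h^2/2 + u)) ≤ Real.exp (c*h^2) * Real.exp (-u/2) := by
        rw [← Real.exp_add]
        apply Real.exp_le_exp.mpr
        have : -u ≤ -u/2 - (1-lam)*h^2/(4*lam) := by
          have h3 : (1-lam)*h^2/(2*lam) ≤ u := hukey.le
          have h4 : (1-lam)*h^2/(4*lam) ≤ u/2 := by
            rw [div_le_iff₀ (by positivity)] at h3 ⊢
            nlinarith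
          linarith
        calc h^2/(1+lam) - (h^2/2 + u) ≤ h^2/(1+lam) - h^2/2 - u/2 - (1-lam)*h^2/(4*lam) := by
              linarith
        _ = c*h^2 + -u/2 := by rw [hc_def]; ring
      calc W lam h u ≤ Real.sqrt (2*π) * (h * s / (1+lam)^2)
            * Real.exp (h^2/(1+lam) - (h^2/2 + u)) := step1
      _ ≤ Real.sqrt (2*π) * (h * s / (1+lam)^2) * (Real.exp (c*h^2) * Real.exp (-u/2)) := by
            apply mul_le_mul_of_nonneg_left step2 (by positivity)
      _ = (Real.sqrt (2*π) * s/(1+lam)^2) * (h * Real.exp (c*h^2)) * Real.exp (-u/2) := by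
            ring
      _ ≤ (Real.sqrt (2*π) * s/(1+lam)^2) * 1 * Real.exp (-u/2) := by
            apply mul_le_mul_of_nonneg_right _ (Real.exp_pos _).le
            exact mul_le_mul_of_nonneg_left hche (by positivity)
      _ = (Real.sqrt (2*π) * s/(1+lam)^2) * Real.exp (-u/2) := by ring
      _ ≤ _ := le_add_of_nonneg_left hterm1
  by_cases hlam : 0 < lam
  · -- c < 0
    have hcneg : c < 0 := by
      have hkey : c = -(1-lam)^2/(4*lam*(1+lam)) := by
        rw [hc_def]
        field_simp
        ring
      rw [hkey]
      apply div_neg_of_neg_of_pos _ (by nlinarith : (0:ℝ) < 4*lam*(1+lam))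
      have h5 : (0:ℝ) < (1-lam)^2 := pow_pos (by linarith) 2
      linarith
    refine ⟨max 1 (-c)⁻¹, le_max_left _ _, ?_⟩
    intro h hh u hu
    have hh1 : 1 ≤ h := le_trans (le_max_left _ _) hh
    have hh0 : (0:ℝ) < h := lt_of_lt_of_le one_pos hh1
    apply hmain h hh1 _ u hu
    intro _
    have hhc : (-c)⁻¹ ≤ h := le_trans (le_max_right _ _) hh
    have hch_le : c * h ≤ -1 := by
      have h1 : (-c) * (-c)⁻¹ ≤ (-c) * h := by
        apply mul_le_mul_of_nonneg_left hhc (by linarith)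
      rw [mul_inv_cancel₀ (by linarith : -c ≠ 0)] at h1
      nlinarith
    calc h * Real.exp (c*h^2) ≤ Real.exp h * Real.exp (c*h^2) := by
          apply mul_le_mul_of_nonneg_right _ (Real.exp_pos _).le
          linarith [Real.add_one_le_exp h]
    _ = Real.exp (h + c*h^2) := (Real.exp_add _ _).symm
    _ ≤ Real.exp 0 := by
          apply Real.exp_le_exp.mpr
          nlinarith
    _ = 1 := Real.exp_zero
  · refine ⟨1, le_refl _, ?_⟩
    intro h hh u hu
    exact hmain h hh (fun hl => absurd hl hlam) u hu

lemma limit_integral_eq_one :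
    ∫ u in Ioi (0:ℝ), Real.exp (-u/(1+lam)) / (1+lam) = 1 := by
  have hA := hA_pos hl1 hl2
  have h1 : ∀ u : ℝ, Real.exp (-u/(1+lam)) / (1+lam)
      = (1+lam)⁻¹ * Real.exp (-(u * (1+lam)⁻¹)) := by
    intro u
    rw [div_eq_mul_inv, mul_comm]
    congr 2
    field_simp
  simp_rw [h1]
  rw [integral_const_mul]
  have h2 := integral_comp_mul_right_Ioi (fun x => Real.exp (-x)) 0 (inv_pos.mpr hA)
  simp only [zero_mul, smul_eq_mul, inv_inv] at h2
  rw [h2, integral_exp_neg_Ioi_zero, mul_one, inv_mul_cancel₀ hA.ne']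

lemma W_integral_tendsto :
    Tendsto (fun h => ∫ u in Ioi (0:ℝ), W lam h u) atTop (𝓝 1) := by
  obtain ⟨h₀, hh₀1, hbd⟩ := W_bound hl1 hl2
  have hA := hA_pos hl1 hl2
  rw [← limit_integral_eq_one hl1 hl2]
  apply tendsto_integral_filter_of_dominated_convergence
    (fun u => (2/(1+lam)) * Real.exp (-u/(1+lam))
      + (Real.sqrt (2*π) * Real.sqrt (1-lam^2)/(1+lam)^2) * Real.exp (-u/2))
  · filter_upwards [eventually_ge_atTop h₀] with h hh
    apply Measurable.aestronglyMeasurable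
    unfold W
    apply Measurable.mul (Measurable.mul (Measurable.mul ?_ ?_) measurable_const)
      measurable_const
    · fun_prop
    · apply E_measurable.comp
      unfold tfun
      fun_prop
  · filter_upwards [eventually_ge_atTop h₀] with h hh
    rw [ae_restrict_iff' measurableSet_Ioi]
    apply ae_of_all
    intro u hu
    have hh0 : (0:ℝ) ≤ h := le_trans (by linarith) hh
    rw [Real.norm_eq_abs, abs_of_nonneg (W_nonneg hh0 u)]
    exact hbd h hh u hu
  · have i1 : Integrable (fun u : ℝ => Real.exp (-(1+lam)⁻¹ * u))
        (volume.restrict (Ioi (0:ℝ))) := exp_neg_integrableOn_Ioi 0 (inv_pos.mpr hA)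
    have i1' : Integrable (fun u : ℝ => Real.exp (-u/(1+lam)))
        (volume.restrict (Ioi (0:ℝ))) := by
      apply i1.congr
      apply Filter.Eventually.of_forall
      intro u
      beta_reduce; rw [show -(1+lam)⁻¹ * u = -u/(1+lam) by ring]
    have i2 : Integrable (fun u : ℝ => Real.exp (-(1/2 : ℝ) * u))
        (volume.restrict (Ioi (0:ℝ))) := exp_neg_integrableOn_Ioi 0 (by norm_num)
    have i2' : Integrable (fun u : ℝ => Real.exp (-u/2))
        (volume.restrict (Ioi (0:ℝ))) := by
      apply i2.congr
      apply Filter.Eventually.of_forall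
      intro u
      beta_reduce; rw [show -(1/2 : ℝ) * u = -u/2 by ring]
    exact (i1'.const_mul _).add (i2'.const_mul _)
  · rw [ae_restrict_iff' measurableSet_Ioi]
    apply ae_of_all
    intro u hu
    exact W_tendsto hl1 hl2 u


end Stmt12Aux

open Stmt12Aux Real Set

/-- bivariate normal tail approximation, as `h → ∞`. -/
theorem stmt12 (lam : ℝ) (hlam : lam ∈ Set.Ioo (-1 : ℝ) 1) :
    Asymptotics.IsEquivalent atTop (fun h : ℝ => mu lam h)
      (fun h : ℝ => (1 + lam) ^ 2 / (2 * Real.pi * h ^ 2 * Real.sqrt (1 - lam ^ 2)) *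
        Real.exp (-h ^ 2 / (1 + lam))) ∧
    Tendsto (fun h : ℝ => mu lam h /
        ((1 + lam) ^ 2 / (2 * Real.pi * h ^ 2 * Real.sqrt (1 - lam ^ 2)) *
          Real.exp (-h ^ 2 / (1 + lam))))
      atTop (nhds 1) := by
  obtain ⟨hl1, hl2⟩ := hlam
  have hA : (0:ℝ) < 1 + lam := by linarith
  have hs : 0 < Real.sqrt (1-lam^2) := hs_pos hl1 hl2
  have key : Tendsto (fun h : ℝ => mu lam h /
      ((1 + lam) ^ 2 / (2 * Real.pi * h ^ 2 * Real.sqrt (1 - lam ^ 2)) *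
        Real.exp (-h ^ 2 / (1 + lam)))) atTop (nhds 1) := by
    apply (W_integral_tendsto hl1 hl2).congr'
    filter_upwards [eventually_ge_atTop (1:ℝ)] with h hh1
    have hh0 : (0:ℝ) < h := lt_of_lt_of_le one_pos hh1
    have hsq2pi : Real.sqrt (2*π)^2 = 2*π := Real.sq_sqrt (by positivity)
    have hne2pi : Real.sqrt (2*π) ≠ 0 := by positivity
    have hc : (Real.sqrt (2*π))⁻¹ * (Real.sqrt (2*π))⁻¹ * (2*π) = 1 := by
      field_simp
      exact hsq2pi.symm
    have e1 : mu lam h = h⁻¹ * ∫ u in Ioi (0:ℝ),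
        ((Real.sqrt (2*π))⁻¹ * Real.exp (-(h+u/h)^2/2) *
          ((Real.sqrt (2*π))⁻¹ * E (tfun lam h u))) := by
      rw [mu_eq_integral lam ⟨hl1, hl2⟩ h,
        integral_Ioi_subst (fun x => (Real.sqrt (2*π))⁻¹ * Real.exp (-x^2/2) *
          ((Real.sqrt (2*π))⁻¹ * E ((h - lam*x) / Real.sqrt (1-lam^2)))) hh0]
      simp only [tfun]
    have hW2 : ∀ u : ℝ, W lam h u
        = (2*π*h*Real.sqrt (1-lam^2)/(1+lam)^2 * Real.exp (h^2/(1+lam)))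
          * ((Real.sqrt (2*π))⁻¹ * Real.exp (-(h+u/h)^2/2) *
            ((Real.sqrt (2*π))⁻¹ * E (tfun lam h u))) := by
      intro u
      rw [W]
      rw [show (2*π*h*Real.sqrt (1-lam^2)/(1+lam)^2 * Real.exp (h^2/(1+lam)))
          * ((Real.sqrt (2*π))⁻¹ * Real.exp (-(h+u/h)^2/2) *
            ((Real.sqrt (2*π))⁻¹ * E (tfun lam h u)))
          = ((Real.sqrt (2*π))⁻¹ * (Real.sqrt (2*π))⁻¹ * (2*π)) *
            (Real.exp (-(h+u/h)^2/2) * E (tfun lam h u)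
              * (h * Real.sqrt (1-lam^2) / (1+lam)^2) * Real.exp (h^2/(1+lam))) from by ring]
      rw [hc, one_mul]
    calc ∫ u in Ioi (0:ℝ), W lam h u
        = ∫ u in Ioi (0:ℝ), (2*π*h*Real.sqrt (1-lam^2)/(1+lam)^2 * Real.exp (h^2/(1+lam)))
          * ((Real.sqrt (2*π))⁻¹ * Real.exp (-(h+u/h)^2/2) *
            ((Real.sqrt (2*π))⁻¹ * E (tfun lam h u))) := by simp only [hW2]
    _ = (2*π*h*Real.sqrt (1-lam^2)/(1+lam)^2 * Real.exp (h^2/(1+lam)))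
          * ∫ u in Ioi (0:ℝ), ((Real.sqrt (2*π))⁻¹ * Real.exp (-(h+u/h)^2/2) *
            ((Real.sqrt (2*π))⁻¹ * E (tfun lam h u))) := by rw [integral_const_mul]
    _ = mu lam h / ((1 + lam) ^ 2 / (2 * Real.pi * h ^ 2 * Real.sqrt (1 - lam ^ 2)) *
          Real.exp (-h ^ 2 / (1 + lam))) := by
          rw [e1, neg_div, Real.exp_neg]
          field_simp
  refine ⟨?_, key⟩
  rw [Asymptotics.isEquivalent_iff_tendsto_one]
  · exact key
  · filter_upwards [eventually_gt_atTop (0:ℝ)] with h hh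
    apply ne_of_gt
    apply mul_pos (div_pos (pow_pos hA 2) (by positivity)) (Real.exp_pos _)

end
end

section
/- Fix a threshold h > 0. Then the function λ ↦ μ(λ,h) is monotonically nondecreasing on [-1,1]: if λ' ≤ λ then μ(λ',h) ≤ μ(λ,h). -/
open MeasureTheory ProbabilityTheory Filter Topology

noncomputable section

lemma key15 (h x y lam' lam : ℝ) (hh : 0 < h) (hx : h ≤ x)
    (h1 : -1 ≤ lam') (h2 : lam ≤ 1) (h3 : lam' ≤ lam)
    (hy : h ≤ lam' * x + Real.sqrt (1 - lam' ^ 2) * y) :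
    h ≤ lam * x + Real.sqrt (1 - lam ^ 2) * y := by
  have h1' : -1 ≤ lam := le_trans h1 h3
  have h2' : lam' ≤ 1 := le_trans h3 h2
  set s := Real.sqrt (1 - lam ^ 2) with hs_def
  set s' := Real.sqrt (1 - lam' ^ 2) with hs'_def
  have hs : 0 ≤ s := Real.sqrt_nonneg _
  have hs' : 0 ≤ s' := Real.sqrt_nonneg _
  have hs2 : s ^ 2 = 1 - lam ^ 2 := Real.sq_sqrt (by nlinarith)
  have hs'2 : s' ^ 2 = 1 - lam' ^ 2 := Real.sq_sqrt (by nlinarith)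
  rcases eq_or_lt_of_le hs' with hz | hs'pos
  · -- s' = 0, so lam' = ±1
    have h0 : 1 - lam' ^ 2 = 0 := by rw [← hs'2, ← hz]; norm_num
    have hfac : (lam' - 1) * (lam' + 1) = 0 := by linear_combination -h0
    rcases mul_eq_zero.mp hfac with hc | hc
    · -- lam' = 1, hence lam = 1
      have hl' : lam' = (1 : ℝ) := by linarith
      have hl : lam = (1 : ℝ) := le_antisymm h2 (by linarith)
      subst hl
      have hszero : s = 0 := by rw [hs_def]; norm_num
      rw [hszero]
      rw [hl'] at hy
      rw [← hz] at hy
      linarith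
    · -- lam' = -1 : contradiction
      have hl' : lam' = (-1 : ℝ) := by linarith
      rw [hl', ← hz] at hy
      linarith
  · -- s' > 0
    have hyge : (h - lam' * x) / s' ≤ y := by
      rw [div_le_iff₀ hs'pos]; linarith
    set a := h - lam' * x with ha
    set b := h - lam * x with hb
    have hab : b ≤ a := by simp only [ha, hb]; nlinarith
    have hxl : 0 ≤ x - lam * h := by nlinarith
    have hxl' : 0 ≤ x - lam' * h := by nlinarith
    have hid : (1 - lam ^ 2) * a ^ 2 - (1 - lam' ^ 2) * b ^ 2
        = (lam - lam') * (a * (x - lam * h) + b * (x - lam' * h)) := by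
      simp only [ha, hb]; ring
    have hK : s' * b ≤ s * a := by
      rcases lt_or_ge a 0 with haneg | hapos
      · have hbneg : b < 0 := lt_of_le_of_lt hab haneg
        have hr : (lam - lam') * (a * (x - lam * h) + b * (x - lam' * h)) ≤ 0 := by
          have t1 : a * (x - lam * h) ≤ 0 := mul_nonpos_of_nonpos_of_nonneg haneg.le hxl
          have t2 : b * (x - lam' * h) ≤ 0 := mul_nonpos_of_nonpos_of_nonneg hbneg.le hxl'
          exact mul_nonpos_of_nonneg_of_nonpos (by linarith) (by linarith)
        have hsq : (s * (-a)) ^ 2 ≤ (s' * (-b)) ^ 2 := by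
          have e1 : (s * (-a)) ^ 2 = (1 - lam ^ 2) * a ^ 2 := by
            rw [mul_pow, hs2]; ring
          have e2 : (s' * (-b)) ^ 2 = (1 - lam' ^ 2) * b ^ 2 := by
            rw [mul_pow, hs'2]; ring
          rw [e1, e2]; linarith
        have h5 := Real.sqrt_le_sqrt hsq
        rw [Real.sqrt_sq (mul_nonneg hs (by linarith)),
            Real.sqrt_sq (mul_nonneg hs' (by linarith))] at h5
        linarith
      · rcases le_or_gt b 0 with hbnp | hbpos
        · have t1 := mul_nonneg hs hapos
          have t2 := mul_nonpos_of_nonneg_of_nonpos hs' hbnp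
          linarith
        · have hapos' : 0 < a := lt_of_lt_of_le hbpos hab
          have hr : 0 ≤ (lam - lam') * (a * (x - lam * h) + b * (x - lam' * h)) :=
            mul_nonneg (by linarith)
              (add_nonneg (mul_nonneg hapos'.le hxl) (mul_nonneg hbpos.le hxl'))
          have hsq : (s' * b) ^ 2 ≤ (s * a) ^ 2 := by
            have e1 : (s * a) ^ 2 = (1 - lam ^ 2) * a ^ 2 := by rw [mul_pow, hs2]
            have e2 : (s' * b) ^ 2 = (1 - lam' ^ 2) * b ^ 2 := by rw [mul_pow, hs'2]
            rw [e1, e2]; linarith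
          have h5 := Real.sqrt_le_sqrt hsq
          rw [Real.sqrt_sq (mul_nonneg hs' hbpos.le),
              Real.sqrt_sq (mul_nonneg hs hapos)] at h5
          exact h5
    have step1 : s * (a / s') ≤ s * y := mul_le_mul_of_nonneg_left hyge hs
    have step2 : b ≤ s * (a / s') := by
      rw [mul_div_assoc']
      rw [le_div_iff₀ hs'pos]
      linarith [hK]
    simp only [hb] at step2
    linarith

/-- `λ ↦ μ(λ,h)` is monotonically nondecreasing on `[-1,1]`. -/
theorem stmt15 (h : ℝ) (hh : 0 < h) (lam' lam : ℝ)
    (h1 : -1 ≤ lam') (h2 : lam ≤ 1) (h3 : lam' ≤ lam) :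
    mu lam' h ≤ mu lam h := by
  have hmeas : ∀ l : ℝ, Measurable
      (fun z : ℝ × ℝ => (z.1, l * z.1 + Real.sqrt (1 - l ^ 2) * z.2)) := by
    intro l
    exact measurable_fst.prodMk
      ((measurable_const.mul measurable_fst).add (measurable_const.mul measurable_snd))
  have hS : MeasurableSet {p : ℝ × ℝ | h ≤ p.1 ∧ h ≤ p.2} := by
    have he : {p : ℝ × ℝ | h ≤ p.1 ∧ h ≤ p.2} = (Set.Ici h) ×ˢ (Set.Ici h) := by
      ext p; simp only [Set.mem_setOf_eq, Set.mem_prod, Set.mem_Ici]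
    rw [he]; exact measurableSet_Ici.prod measurableSet_Ici
  unfold mu gaussPair
  rw [Measure.map_apply (hmeas lam) hS, Measure.map_apply (hmeas lam') hS]
  refine ENNReal.toReal_mono (measure_ne_top _ _) (measure_mono ?_)
  rintro ⟨z1, z2⟩ ⟨hz1, hz2⟩
  exact ⟨hz1, key15 h z1 z2 lam' lam hh hz1 h1 h2 h3 hz2⟩

end
end

section
/- Fix a threshold h > 0. The function t ↦ μ(t,h) is twice differentiable on (-1,1), with first derivative (d/dt)μ(t,h) = (1/(2π·sqrt(1-t²)))·exp(-h²/(1+t)) and second derivative (d²/dt²)μ(t,h) = (h²/(1+t)² + t/(1-t²))·(d/dt)μ(t,h). In particular, the second derivative is positive for t ∈ (0,1), so the first derivative is increasing on (0,1). -/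
open MeasureTheory ProbabilityTheory Filter Topology

noncomputable section

namespace S17

open Real Set

def phi (x : ℝ) : ℝ := (Real.sqrt (2 * Real.pi))⁻¹ * Real.exp (-x ^ 2 / 2)

def Q (u : ℝ) : ℝ := ((gaussianReal 0 1) (Set.Ici u)).toReal

lemma phi_eq : gaussianPDFReal 0 1 = phi := by
  funext x
  simp [gaussianPDFReal, phi]

lemma phi_nonneg (x : ℝ) : 0 ≤ phi x :=
  mul_nonneg (inv_nonneg.2 (Real.sqrt_nonneg _)) (Real.exp_nonneg _)

lemma phi_le (x : ℝ) : phi x ≤ (Real.sqrt (2 * Real.pi))⁻¹ := by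
  have : Real.exp (-x ^ 2 / 2) ≤ 1 := by
    rw [Real.exp_le_one_iff]
    nlinarith [sq_nonneg x]
  calc phi x ≤ (Real.sqrt (2 * Real.pi))⁻¹ * 1 :=
        mul_le_mul_of_nonneg_left this (inv_nonneg.2 (Real.sqrt_nonneg _))
    _ = _ := mul_one _

lemma continuous_phi : Continuous phi := by
  unfold phi; fun_prop

lemma integrable_phi : Integrable phi := phi_eq ▸ integrable_gaussianPDFReal 0 1

lemma integrable_abs_mul_phi : Integrable (fun x => |x| * phi x) := by
  have h1 : Integrable (fun x : ℝ => x * Real.exp (-(1/2 : ℝ) * x ^ 2)) :=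
    integrable_mul_exp_neg_mul_sq (by norm_num)
  have h2 : Integrable (fun x : ℝ => |x| * Real.exp (-x ^ 2 / 2)) := by
    refine h1.abs.congr (Filter.Eventually.of_forall fun x => ?_)
    simp only [abs_mul, abs_of_nonneg (Real.exp_nonneg _)]
    ring_nf
  refine (h2.const_mul (Real.sqrt (2 * Real.pi))⁻¹).congr
    (Filter.Eventually.of_forall fun x => ?_)
  unfold phi; ring

lemma Q_eq_integral (u : ℝ) : Q u = ∫ x in Set.Ici u, phi x := by
  rw [Q, gaussianReal_apply_eq_integral 0 one_ne_zero, ENNReal.toReal_ofReal, phi_eq]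
  rw [phi_eq]
  exact setIntegral_nonneg measurableSet_Ici fun x _ => phi_nonneg x

lemma Q_sub (u : ℝ) : Q u = Q 0 - ∫ x in (0:ℝ)..u, phi x := by
  have key : ∀ v : ℝ, Q v = (∫ x, phi x) - ∫ x in Set.Iic v, phi x := by
    intro v
    rw [Q_eq_integral]
    have := intervalIntegral.integral_Iio_add_Ici (μ := volume) (b := v)
      (integrable_phi.integrableOn) (integrable_phi.integrableOn)
    have h2 : ∫ x in Set.Iio v, phi x = ∫ x in Set.Iic v, phi x :=
      (MeasureTheory.integral_Iic_eq_integral_Iio).symm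
    linarith
  have h3 := intervalIntegral.integral_Iic_sub_Iic (μ := volume) (a := (0:ℝ)) (b := u)
    integrable_phi.integrableOn integrable_phi.integrableOn
  rw [key, key 0, ← h3]
  ring

lemma hasDerivAt_Q (u : ℝ) : HasDerivAt Q (-phi u) u := by
  have h1 : HasDerivAt (fun v => ∫ x in (0:ℝ)..v, phi x) (phi u) u := by
    refine intervalIntegral.integral_hasDerivAt_right
      (integrable_phi.intervalIntegrable)
      (continuous_phi.stronglyMeasurableAtFilter _ _) continuous_phi.continuousAt
  have h2 : HasDerivAt (fun v => Q 0 - ∫ x in (0:ℝ)..v, phi x) (-phi u) u :=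
    (hasDerivAt_const u (Q 0)).sub h1 |>.congr_deriv (by ring)
  exact h2.congr_of_eventuallyEq (Filter.Eventually.of_forall fun v => (Q_sub v))

lemma continuous_Q : Continuous Q :=
  continuous_iff_continuousAt.2 fun u => (hasDerivAt_Q u).continuousAt

lemma Q_nonneg (u : ℝ) : 0 ≤ Q u := ENNReal.toReal_nonneg

lemma Q_le_one (u : ℝ) : Q u ≤ 1 := by
  rw [Q]
  have := measure_mono (Set.subset_univ (Set.Ici u)) (μ := gaussianReal 0 1)
  simp only [measure_univ] at this
  exact ENNReal.toReal_le_of_le_ofReal one_pos.le (by simpa using this)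


lemma Qdef (u : ℝ) : Q u = ((gaussianReal 0 1) (Set.Ici u)).toReal := rfl

lemma mu_eq {lam : ℝ} (hl : lam ∈ Set.Ioo (-1:ℝ) 1) (h : ℝ) :
    mu lam h = ∫ x in Set.Ioi h, phi x * Q ((h - lam * x) / Real.sqrt (1 - lam ^ 2)) := by
  obtain ⟨hl1, hl2⟩ := hl
  have hpos : (0:ℝ) < 1 - lam ^ 2 := by nlinarith
  set σ : ℝ := Real.sqrt (1 - lam ^ 2) with hσdef
  have hσ : 0 < σ := Real.sqrt_pos.2 hpos
  have hfm : Measurable (fun z : ℝ × ℝ => (z.1, lam * z.1 + σ * z.2)) := by fun_prop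
  have hS : MeasurableSet {p : ℝ × ℝ | h ≤ p.1 ∧ h ≤ p.2} :=
    (measurableSet_le measurable_const measurable_fst).inter
      (measurableSet_le measurable_const measurable_snd)
  have hpre : MeasurableSet ((fun z : ℝ × ℝ => (z.1, lam * z.1 + σ * z.2)) ⁻¹'
      {p : ℝ × ℝ | h ≤ p.1 ∧ h ≤ p.2}) := hfm hS
  have hu : Measurable (fun x : ℝ => (h - lam * x) / σ) := by fun_prop
  have hQm : Measurable (fun r : ℝ => (gaussianReal 0 1) (Set.Ici r)) :=
    Antitone.measurable (fun a b hab => measure_mono (Set.Ici_subset_Ici.2 hab))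
  -- step 1 : map
  rw [mu, gaussPair, Measure.map_apply hfm hS]
  -- step 2 : prod_apply
  rw [Measure.prod_apply hpre]
  have hsec : ∀ x : ℝ, (gaussianReal 0 1) (Prod.mk x ⁻¹'
      ((fun z : ℝ × ℝ => (z.1, lam * z.1 + σ * z.2)) ⁻¹' {p : ℝ × ℝ | h ≤ p.1 ∧ h ≤ p.2}))
      = Set.indicator (Set.Ici h) (fun x => (gaussianReal 0 1) (Set.Ici ((h - lam * x) / σ))) x := by
    intro x
    by_cases hx : h ≤ x
    · rw [Set.indicator_of_mem (Set.mem_Ici.2 hx)]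
      congr 1
      ext y
      simp only [Set.mem_preimage, Set.mem_setOf_eq, Set.mem_Ici]
      constructor
      · rintro ⟨-, hy⟩
        rw [div_le_iff₀ hσ]
        linarith [mul_comm σ y]
      · intro hy
        rw [div_le_iff₀ hσ] at hy
        exact ⟨hx, by linarith [mul_comm σ y]⟩
    · rw [Set.indicator_of_notMem (by simpa using hx)]
      convert measure_empty (μ := gaussianReal 0 1)
      ext y
      simp only [Set.mem_preimage, Set.mem_setOf_eq, Set.mem_empty_iff_false, iff_false]
      exact fun hc => hx hc.1
  calc (∫⁻ x, (gaussianReal 0 1) (Prod.mk x ⁻¹'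
        ((fun z : ℝ × ℝ => (z.1, lam * z.1 + σ * z.2)) ⁻¹' {p : ℝ × ℝ | h ≤ p.1 ∧ h ≤ p.2}))
        ∂(gaussianReal 0 1)).toReal
      = (∫⁻ x in Set.Ici h, (gaussianReal 0 1) (Set.Ici ((h - lam * x) / σ))
          ∂(gaussianReal 0 1)).toReal := by
        congr 1
        rw [← lintegral_indicator measurableSet_Ici]
        exact lintegral_congr hsec
    _ = (∫⁻ x in Set.Ici h, ENNReal.ofReal (Q ((h - lam * x) / σ))
          ∂(gaussianReal 0 1)).toReal := by
        congr 1
        apply lintegral_congr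
        intro x
        rw [Qdef, ENNReal.ofReal_toReal (measure_ne_top _ _)]
    _ = (∫⁻ x in Set.Ici h, ENNReal.ofReal (phi x * Q ((h - lam * x) / σ)) ∂volume).toReal := by
        congr 1
        rw [gaussianReal_of_var_ne_zero 0 one_ne_zero,
          restrict_withDensity measurableSet_Ici,
          lintegral_withDensity_eq_lintegral_mul _ (measurable_gaussianPDF 0 1)
            (show Measurable fun x : ℝ => ENNReal.ofReal (Q ((h - lam * x) / σ)) from
              ENNReal.measurable_ofReal.comp (continuous_Q.measurable.comp hu))]
        apply lintegral_congr
        intro x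
        simp only [Pi.mul_apply, Function.comp_apply]
        rw [gaussianPDF, phi_eq, ← ENNReal.ofReal_mul (phi_nonneg x)]
    _ = ∫ x in Set.Ici h, phi x * Q ((h - lam * x) / σ) := by
        rw [integral_eq_lintegral_of_nonneg_ae]
        · exact Filter.Eventually.of_forall fun x =>
            mul_nonneg (phi_nonneg x) (Q_nonneg _)
        · exact (continuous_phi.mul
            (continuous_Q.comp (by fun_prop))).aestronglyMeasurable.restrict
    _ = ∫ x in Set.Ioi h, phi x * Q ((h - lam * x) / σ) :=
        MeasureTheory.integral_Ici_eq_integral_Ioi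

lemma hasDerivAt_inner {t : ℝ} (ht : t ∈ Set.Ioo (-1:ℝ) 1) (h z : ℝ) :
    HasDerivAt (fun l : ℝ => (h - l * z) / Real.sqrt (1 - l ^ 2))
      ((t * h - z) / (Real.sqrt (1 - t ^ 2)) ^ 3) t := by
  obtain ⟨h1, h2⟩ := ht
  have hpos : (0:ℝ) < 1 - t ^ 2 := by nlinarith
  have hs : (0:ℝ) < Real.sqrt (1 - t ^ 2) := Real.sqrt_pos.2 hpos
  have hsq : Real.sqrt (1 - t ^ 2) ^ 2 = 1 - t ^ 2 := Real.sq_sqrt hpos.le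
  have hnum : HasDerivAt (fun l : ℝ => h - l * z) (-z) t := by
    simpa using ((hasDerivAt_id t).mul_const z).const_sub h
  have hden0 : HasDerivAt (fun l : ℝ => 1 - l ^ 2) (-(2 * t)) t := by
    simpa using (hasDerivAt_pow 2 t).const_sub 1
  have hden : HasDerivAt (fun l : ℝ => Real.sqrt (1 - l ^ 2))
      (-(2 * t) / (2 * Real.sqrt (1 - t ^ 2))) t := hden0.sqrt hpos.ne'
  have := hnum.div hden hs.ne'
  refine this.congr_deriv (Eq.symm ?_)
  field_simp
  linear_combination z * hsq

def Fder (h t z : ℝ) : ℝ :=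
  phi z * (phi ((h - t * z) / Real.sqrt (1 - t ^ 2)) *
    ((z - t * h) / (Real.sqrt (1 - t ^ 2)) ^ 3))

lemma hasDerivAt_F {t : ℝ} (ht : t ∈ Set.Ioo (-1:ℝ) 1) (h z : ℝ) :
    HasDerivAt (fun l : ℝ => phi z * Q ((h - l * z) / Real.sqrt (1 - l ^ 2)))
      (Fder h t z) t := by
  have h1 := hasDerivAt_inner ht h z
  have h2 : HasDerivAt (fun l : ℝ => Q ((h - l * z) / Real.sqrt (1 - l ^ 2)))
      (-phi ((h - t * z) / Real.sqrt (1 - t ^ 2)) * ((t * h - z) / (Real.sqrt (1 - t ^ 2)) ^ 3)) t :=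
    (hasDerivAt_Q _).comp t h1
  have h3 := h2.const_mul (phi z)
  refine h3.congr_deriv (Eq.symm ?_)
  unfold Fder; ring

lemma hasDerivAt_integral (h : ℝ) (hh : 0 < h) {t : ℝ} (ht : t ∈ Set.Ioo (-1:ℝ) 1) :
    HasDerivAt (fun l => ∫ z in Set.Ioi h, phi z * Q ((h - l * z) / Real.sqrt (1 - l ^ 2)))
      (∫ z in Set.Ioi h, Fder h t z) t := by
  obtain ⟨ht1, ht2⟩ := ht
  have htabs : |t| < 1 := abs_lt.2 ⟨ht1, ht2⟩
  set M : ℝ := (1 + |t|) / 2 with hMdef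
  have hM1 : M < 1 := by simp only [hMdef]; linarith
  have hM0 : 0 ≤ M := by positivity
  set ε : ℝ := (1 - |t|) / 2 with hεdef
  have hε : 0 < ε := by simp only [hεdef]; linarith
  have hball : ∀ l ∈ Metric.ball t ε, |l| ≤ M ∧ l ∈ Set.Ioo (-1:ℝ) 1 := by
    intro l hl
    rw [Metric.mem_ball, Real.dist_eq] at hl
    have h1 : |l| ≤ M := by
      have := abs_sub_abs_le_abs_sub l t
      have hlt := le_of_lt hl
      simp only [hMdef, hεdef] at *
      linarith [abs_nonneg (l - t)]
    refine ⟨h1, ?_⟩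
    have := abs_lt.1 (lt_of_le_of_lt h1 hM1)
    exact ⟨this.1, this.2⟩
  set c : ℝ := Real.sqrt (1 - M ^ 2) with hcdef
  have hc2 : (0:ℝ) < 1 - M ^ 2 := by nlinarith
  have hc : 0 < c := Real.sqrt_pos.2 hc2
  have hσ_lb : ∀ l ∈ Metric.ball t ε, c ≤ Real.sqrt (1 - l ^ 2) := by
    intro l hl
    refine Real.sqrt_le_sqrt ?_
    have h1 := (hball l hl).1
    have h2 : l ^ 2 ≤ M ^ 2 := by
      rw [← sq_abs]
      exact pow_le_pow_left₀ (abs_nonneg l) h1 2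
    linarith
  set bound : ℝ → ℝ := fun z => ((Real.sqrt (2 * Real.pi))⁻¹ / c ^ 3) * (phi z * (|z| + h))
    with hbounddef
  have hbound_int : Integrable bound (volume.restrict (Set.Ioi h)) := by
    have h1 : Integrable (fun z => phi z * (|z| + h)) := by
      have := integrable_abs_mul_phi.add (integrable_phi.const_mul h)
      refine this.congr (Filter.Eventually.of_forall fun z => ?_)
      simp; ring
    exact ((h1.const_mul _).restrict)
  have key := hasDerivAt_integral_of_dominated_loc_of_deriv_le (𝕜 := ℝ)
    (μ := volume.restrict (Set.Ioi h))
    (F := fun l z => phi z * Q ((h - l * z) / Real.sqrt (1 - l ^ 2)))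
    (F' := fun l z => Fder h l z) (x₀ := t) (bound := bound) (Metric.ball_mem_nhds t hε)
    ?_ ?_ ?_ ?_ hbound_int ?_
  · exact key.2
  · refine Filter.Eventually.of_forall fun l => ?_
    exact ((continuous_phi.mul (continuous_Q.comp (by fun_prop))).aestronglyMeasurable).restrict
  · refine (integrable_phi.restrict.mono' ?_ ?_)
    · exact ((continuous_phi.mul (continuous_Q.comp (by fun_prop))).aestronglyMeasurable).restrict
    · refine Filter.Eventually.of_forall fun z => ?_
      rw [Real.norm_eq_abs, abs_mul, abs_of_nonneg (phi_nonneg z), abs_of_nonneg (Q_nonneg _)]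
      calc phi z * Q _ ≤ phi z * 1 := mul_le_mul_of_nonneg_left (Q_le_one _) (phi_nonneg z)
        _ = phi z := mul_one _
  · exact ((continuous_phi.mul ((continuous_phi.comp (by fun_prop)).mul
      (by fun_prop))).aestronglyMeasurable).restrict
  · refine Filter.Eventually.of_forall fun z => fun l hl => ?_
    obtain ⟨habs, hIoo⟩ := hball l hl
    have hσl : c ≤ Real.sqrt (1 - l ^ 2) := hσ_lb l hl
    have hσlpos : 0 < Real.sqrt (1 - l ^ 2) := lt_of_lt_of_le hc hσl
    rw [Real.norm_eq_abs]
    unfold Fder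
    rw [hbounddef]
    simp only []
    rw [abs_mul, abs_mul, abs_of_nonneg (phi_nonneg z), abs_of_nonneg (phi_nonneg _)]
    have h1 : |(z - l * h) / Real.sqrt (1 - l ^ 2) ^ 3| ≤ (|z| + h) / c ^ 3 := by
      rw [abs_div, abs_of_nonneg (by positivity : (0:ℝ) ≤ Real.sqrt (1 - l ^ 2) ^ 3)]
      refine div_le_div₀ (by positivity) ?_ (by positivity) ?_
      · calc |z - l * h| ≤ |z| + |l * h| := abs_sub _ _
          _ ≤ |z| + h := by
            rw [abs_mul, abs_of_pos hh]
            nlinarith [abs_nonneg z]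
      · exact pow_le_pow_left₀ hc.le hσl 3
    calc phi z * (phi _ * |(z - l * h) / Real.sqrt (1 - l ^ 2) ^ 3|)
        ≤ phi z * ((Real.sqrt (2 * Real.pi))⁻¹ * ((|z| + h) / c ^ 3)) := by
          refine mul_le_mul_of_nonneg_left ?_ (phi_nonneg z)
          exact mul_le_mul (phi_le _) h1 (abs_nonneg _)
            (inv_nonneg.2 (Real.sqrt_nonneg _))
      _ = (Real.sqrt (2 * Real.pi))⁻¹ / c ^ 3 * (phi z * (|z| + h)) := by ring
  · exact Filter.Eventually.of_forall fun z => fun l hl => hasDerivAt_F (hball l hl).2 h z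

lemma integral_inner (h : ℝ) (hh : 0 < h) {t : ℝ} (ht : t ∈ Set.Ioo (-1:ℝ) 1) :
    ∫ z in Set.Ioi h, (z - t * h) * Real.exp (-(z - t * h) ^ 2 / (2 * (1 - t ^ 2)))
      = (1 - t ^ 2) * Real.exp (-(h - t * h) ^ 2 / (2 * (1 - t ^ 2))) := by
  obtain ⟨ht1, ht2⟩ := ht
  have hpos : (0:ℝ) < 1 - t ^ 2 := by nlinarith
  set g : ℝ → ℝ := fun z => -(1 - t ^ 2) * Real.exp (-(z - t * h) ^ 2 / (2 * (1 - t ^ 2)))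
    with hgdef
  have hderiv : ∀ x ∈ Set.Ici h, HasDerivAt g
      ((x - t * h) * Real.exp (-(x - t * h) ^ 2 / (2 * (1 - t ^ 2)))) x := by
    intro x _
    have h1 : HasDerivAt (fun z : ℝ => -(z - t * h) ^ 2 / (2 * (1 - t ^ 2)))
        (-(x - t * h) / (1 - t ^ 2)) x := by
      have h2 : HasDerivAt (fun z : ℝ => z - t * h) 1 x := by
        simpa using (hasDerivAt_id x).sub_const (t * h)
      have h3 := (h2.pow 2).neg.div_const (2 * (1 - t ^ 2))
      refine h3.congr_deriv (Eq.symm ?_)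
      field_simp
      ring
    have h4 := (h1.exp).const_mul (-(1 - t ^ 2))
    refine h4.congr_deriv (Eq.symm ?_)
    field_simp
  have hpos' : ∀ x ∈ Set.Ioi h, 0 ≤ (x - t * h) * Real.exp (-(x - t * h) ^ 2 / (2 * (1 - t ^ 2))) := by
    intro x hx
    have : t * h < h := by nlinarith
    have : 0 ≤ x - t * h := by
      simp only [Set.mem_Ioi] at hx
      linarith
    positivity
  have htend : Tendsto g atTop (nhds 0) := by
    rw [hgdef]
    have h1 : Tendsto (fun z : ℝ => -(z - t * h) ^ 2 / (2 * (1 - t ^ 2))) atTop atBot := by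
      apply Tendsto.atBot_div_const (by linarith : (0:ℝ) < 2 * (1 - t ^ 2))
      apply tendsto_neg_atTop_atBot.comp
      have h2 : Tendsto (fun z : ℝ => z - t * h) atTop atTop :=
        tendsto_atTop_add_const_right _ _ tendsto_id
      exact (tendsto_pow_atTop (by norm_num : 2 ≠ 0)).comp h2
    have h3 := (Real.tendsto_exp_atBot).comp h1
    have h4 := h3.const_mul (-(1 - t ^ 2))
    simpa using h4
  have key := integral_Ioi_of_hasDerivAt_of_nonneg' (fun x hx => hderiv x hx) hpos' htend
  rw [key, hgdef]
  simp
  ring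

lemma integral_Fder (h : ℝ) (hh : 0 < h) {t : ℝ} (ht : t ∈ Set.Ioo (-1:ℝ) 1) :
    ∫ z in Set.Ioi h, Fder h t z
      = 1 / (2 * Real.pi * Real.sqrt (1 - t ^ 2)) * Real.exp (-h ^ 2 / (1 + t)) := by
  obtain ⟨ht1, ht2⟩ := ht
  have hpos : (0:ℝ) < 1 - t ^ 2 := by nlinarith
  set s : ℝ := Real.sqrt (1 - t ^ 2) with hsdef
  have hs : 0 < s := Real.sqrt_pos.2 hpos
  have hsq : s ^ 2 = 1 - t ^ 2 := Real.sq_sqrt hpos.le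
  have h2pi : (Real.sqrt (2 * Real.pi))⁻¹ * (Real.sqrt (2 * Real.pi))⁻¹ = (2 * Real.pi)⁻¹ := by
    rw [← mul_inv, Real.mul_self_sqrt (by positivity)]
  have hpt : ∀ z : ℝ, Fder h t z = ((2 * Real.pi * s ^ 3)⁻¹ * Real.exp (-h ^ 2 / 2)) *
      ((z - t * h) * Real.exp (-(z - t * h) ^ 2 / (2 * (1 - t ^ 2)))) := by
    intro z
    have hexp : Real.exp (-z ^ 2 / 2) * Real.exp (-((h - t * z) / s) ^ 2 / 2)
        = Real.exp (-h ^ 2 / 2) * Real.exp (-(z - t * h) ^ 2 / (2 * (1 - t ^ 2))) := by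
      rw [← Real.exp_add, ← Real.exp_add]
      congr 1
      rw [div_pow, hsq]
      field_simp
      ring
    unfold Fder phi
    rw [← hsdef]
    calc (Real.sqrt (2 * Real.pi))⁻¹ * Real.exp (-z ^ 2 / 2) *
          ((Real.sqrt (2 * Real.pi))⁻¹ * Real.exp (-((h - t * z) / s) ^ 2 / 2) *
            ((z - t * h) / s ^ 3))
        = ((Real.sqrt (2 * Real.pi))⁻¹ * (Real.sqrt (2 * Real.pi))⁻¹) *
            (Real.exp (-z ^ 2 / 2) * Real.exp (-((h - t * z) / s) ^ 2 / 2)) *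
            ((z - t * h) / s ^ 3) := by ring
      _ = (2 * Real.pi)⁻¹ * (Real.exp (-h ^ 2 / 2) *
            Real.exp (-(z - t * h) ^ 2 / (2 * (1 - t ^ 2)))) * ((z - t * h) / s ^ 3) := by
          rw [h2pi, hexp]
      _ = _ := by field_simp
  rw [setIntegral_congr_fun measurableSet_Ioi (fun z _ => hpt z), MeasureTheory.integral_const_mul,
    integral_inner h hh ⟨ht1, ht2⟩]
  have hfin : Real.exp (-h ^ 2 / 2) * Real.exp (-(h - t * h) ^ 2 / (2 * (1 - t ^ 2)))
      = Real.exp (-h ^ 2 / (1 + t)) := by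
    rw [← Real.exp_add]
    congr 1
    have h1t : (1:ℝ) + t ≠ 0 := by linarith
    have h1t' : (1:ℝ) - t ≠ 0 := by linarith
    have : 1 - t ^ 2 = (1 + t) * (1 - t) := by ring
    rw [this]
    field_simp
    ring
  calc (2 * Real.pi * s ^ 3)⁻¹ * Real.exp (-h ^ 2 / 2) *
        ((1 - t ^ 2) * Real.exp (-(h - t * h) ^ 2 / (2 * (1 - t ^ 2))))
      = (2 * Real.pi * s ^ 3)⁻¹ * (1 - t ^ 2) *
          (Real.exp (-h ^ 2 / 2) * Real.exp (-(h - t * h) ^ 2 / (2 * (1 - t ^ 2)))) := by ring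
    _ = (2 * Real.pi * s ^ 3)⁻¹ * s ^ 2 * Real.exp (-h ^ 2 / (1 + t)) := by rw [hfin, hsq]
    _ = 1 / (2 * Real.pi * s) * Real.exp (-h ^ 2 / (1 + t)) := by
        have hπ : (0:ℝ) < Real.pi := Real.pi_pos
        field_simp

lemma hasDerivAt_g (h : ℝ) {t : ℝ} (ht : t ∈ Set.Ioo (-1:ℝ) 1) :
    HasDerivAt (fun s => 1 / (2 * Real.pi * Real.sqrt (1 - s ^ 2)) * Real.exp (-h ^ 2 / (1 + s)))
      ((h ^ 2 / (1 + t) ^ 2 + t / (1 - t ^ 2)) *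
        (1 / (2 * Real.pi * Real.sqrt (1 - t ^ 2)) * Real.exp (-h ^ 2 / (1 + t)))) t := by
  obtain ⟨ht1, ht2⟩ := ht
  have hpos : (0:ℝ) < 1 - t ^ 2 := by nlinarith
  have hs : 0 < Real.sqrt (1 - t ^ 2) := Real.sqrt_pos.2 hpos
  have hsq : Real.sqrt (1 - t ^ 2) ^ 2 = 1 - t ^ 2 := Real.sq_sqrt hpos.le
  have h1t : (0:ℝ) < 1 + t := by linarith
  have hπ : (0:ℝ) < Real.pi := Real.pi_pos
  have hden0 : HasDerivAt (fun l : ℝ => 1 - l ^ 2) (-(2 * t)) t := by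
    simpa using (hasDerivAt_pow 2 t).const_sub 1
  have hA : HasDerivAt (fun s : ℝ => 2 * Real.pi * Real.sqrt (1 - s ^ 2))
      (2 * Real.pi * (-(2 * t) / (2 * Real.sqrt (1 - t ^ 2)))) t := by
    exact ((hden0.sqrt hpos.ne').const_mul (2 * Real.pi))
  have hAne : 2 * Real.pi * Real.sqrt (1 - t ^ 2) ≠ 0 := by positivity
  have hInv : HasDerivAt (fun s : ℝ => 1 / (2 * Real.pi * Real.sqrt (1 - s ^ 2)))
      (-(2 * Real.pi * (-(2 * t) / (2 * Real.sqrt (1 - t ^ 2)))) /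
        (2 * Real.pi * Real.sqrt (1 - t ^ 2)) ^ 2) t := by
    simp only [one_div]; exact hA.inv hAne
  have hq : HasDerivAt (fun s : ℝ => -h ^ 2 / (1 + s))
      ((0 * (1 + t) - -h ^ 2 * 1) / (1 + t) ^ 2) t := by
    exact (hasDerivAt_const t (-h ^ 2)).div ((hasDerivAt_id t).const_add 1) h1t.ne'
  have hE : HasDerivAt (fun s : ℝ => Real.exp (-h ^ 2 / (1 + s)))
      (Real.exp (-h ^ 2 / (1 + t)) * ((0 * (1 + t) - -h ^ 2 * 1) / (1 + t) ^ 2)) t := hq.exp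
  have := hInv.mul hE
  refine this.congr_deriv (Eq.symm ?_)
  field_simp
  linear_combination (t + 2 * t ^ 2 + t ^ 3) * hsq


end S17

/-- first and second derivatives of `t ↦ μ(t,h)` on `(-1,1)`;
positivity of the second derivative on `(0,1)`; monotonicity of the first
derivative on `(0,1)`. -/
theorem stmt17 (h : ℝ) (hh : 0 < h) :
    (∀ t ∈ Set.Ioo (-1 : ℝ) 1,
      HasDerivAt (fun s => mu s h)
        (1 / (2 * Real.pi * Real.sqrt (1 - t ^ 2)) * Real.exp (-h ^ 2 / (1 + t))) t) ∧
    (∀ t ∈ Set.Ioo (-1 : ℝ) 1,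
      HasDerivAt (fun s => 1 / (2 * Real.pi * Real.sqrt (1 - s ^ 2)) * Real.exp (-h ^ 2 / (1 + s)))
        ((h ^ 2 / (1 + t) ^ 2 + t / (1 - t ^ 2)) *
          (1 / (2 * Real.pi * Real.sqrt (1 - t ^ 2)) * Real.exp (-h ^ 2 / (1 + t)))) t) ∧
    (∀ t ∈ Set.Ioo (0 : ℝ) 1,
      0 < (h ^ 2 / (1 + t) ^ 2 + t / (1 - t ^ 2)) *
        (1 / (2 * Real.pi * Real.sqrt (1 - t ^ 2)) * Real.exp (-h ^ 2 / (1 + t)))) ∧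
    StrictMonoOn (fun s => 1 / (2 * Real.pi * Real.sqrt (1 - s ^ 2)) * Real.exp (-h ^ 2 / (1 + s)))
      (Set.Ioo (0 : ℝ) 1) := by
  refine ⟨?_, ?_, ?_, ?_⟩
  · intro t ht
    have h1 := S17.hasDerivAt_integral h hh ht
    rw [S17.integral_Fder h hh ht] at h1
    refine h1.congr_of_eventuallyEq ?_
    filter_upwards [isOpen_Ioo.eventually_mem ht] with s hs
    exact S17.mu_eq hs h
  · intro t ht
    exact S17.hasDerivAt_g h ht
  · intro t ht
    obtain ⟨ht0, ht1⟩ := ht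
    have hpos : (0:ℝ) < 1 - t ^ 2 := by nlinarith
    have h1t : (0:ℝ) < 1 + t := by linarith
    have hs : (0:ℝ) < Real.sqrt (1 - t ^ 2) := Real.sqrt_pos.2 hpos
    have hπ := Real.pi_pos
    refine mul_pos (add_pos ?_ ?_) (mul_pos ?_ (Real.exp_pos _))
    · exact div_pos (pow_pos hh 2) (pow_pos h1t 2)
    · exact div_pos ht0 hpos
    · rw [one_div]
      positivity
  · have hsub : Set.Ioo (0:ℝ) 1 ⊆ Set.Ioo (-1:ℝ) 1 := fun x hx => ⟨by linarith [hx.1], hx.2⟩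
    refine strictMonoOn_of_deriv_pos (convex_Ioo 0 1) ?_ ?_
    · intro x hx
      exact (S17.hasDerivAt_g h (hsub hx)).continuousAt.continuousWithinAt
    · intro x hx
      rw [interior_Ioo] at hx
      rw [(S17.hasDerivAt_g h (hsub hx)).deriv]
      obtain ⟨ht0, ht1⟩ := hx
      have hpos : (0:ℝ) < 1 - x ^ 2 := by nlinarith
      have h1t : (0:ℝ) < 1 + x := by linarith
      have hs : (0:ℝ) < Real.sqrt (1 - x ^ 2) := Real.sqrt_pos.2 hpos
      have hπ := Real.pi_pos
      refine mul_pos (add_pos ?_ ?_) (mul_pos ?_ (Real.exp_pos _))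
      · exact div_pos (pow_pos hh 2) (pow_pos h1t 2)
      · exact div_pos ht0 hpos
      · rw [one_div]
        positivity

end
end

section
/- Fix r ∈ (0,1), λ ∈ (2r-1, 1) with λ > 0, and η > 0. For each m set ε_m := ε_m(λ,η,r). Then μ_m(λ) − μ_m(λ − ε_m) ~ ε_m·(1/(2π·sqrt(1-λ²)))·exp(-h_m²/(1+λ)) as m → ∞. -/
open MeasureTheory ProbabilityTheory Filter Topology

noncomputable section

open scoped NNReal ENNReal

abbrev pdf1 : ℝ → ℝ := gaussianPDFReal 0 1

lemma continuous_pdf1 : Continuous pdf1 := by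
  show Continuous (gaussianPDFReal 0 1)
  rw [gaussianPDFReal_def]; fun_prop

lemma pdf1_nonneg (x : ℝ) : 0 ≤ pdf1 x := gaussianPDFReal_nonneg 0 1 x

lemma integrable_pdf1 : Integrable pdf1 := integrable_gaussianPDFReal 0 1

lemma pdf1_eq (x : ℝ) : pdf1 x = (Real.sqrt (2*Real.pi))⁻¹ * Real.exp (-(x^2)/2) := by
  simp [gaussianPDFReal, neg_div]

lemma pdf1_le (x : ℝ) : pdf1 x ≤ (Real.sqrt (2*Real.pi))⁻¹ := by
  rw [pdf1_eq]
  have h1 : Real.exp (-(x^2)/2) ≤ 1 := by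
    rw [Real.exp_le_one_iff]
    have : (0:ℝ) ≤ x^2 := sq_nonneg x
    linarith
  have h2 : (0:ℝ) ≤ (Real.sqrt (2*Real.pi))⁻¹ := by positivity
  nlinarith

lemma gaussTail_eq (x : ℝ) : gaussTail x = ∫ t in Set.Ioi x, pdf1 t := by
  have : {z : ℝ | x ≤ z} = Set.Ici x := rfl
  rw [gaussTail, this, gaussianReal_apply_eq_integral 0 one_ne_zero,
    ENNReal.toReal_ofReal (setIntegral_nonneg measurableSet_Ici fun t _ => pdf1_nonneg t),
    MeasureTheory.integral_Ici_eq_integral_Ioi]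

lemma gaussTail_sub (y : ℝ) : gaussTail y = gaussTail 0 - ∫ t in (0:ℝ)..y, pdf1 t := by
  have key : ∀ z : ℝ, gaussTail z + ∫ t in Set.Iic z, pdf1 t = ∫ t, pdf1 t := by
    intro z
    rw [gaussTail_eq]
    have : ∫ t, pdf1 t = (∫ t in Set.Iic z, pdf1 t) + ∫ t in Set.Ioi z, pdf1 t := by
      rw [← MeasureTheory.setIntegral_union (Set.Iic_disjoint_Ioi le_rfl) measurableSet_Ioi
        integrable_pdf1.integrableOn integrable_pdf1.integrableOn, Set.Iic_union_Ioi,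
        setIntegral_univ]
    linarith
  have h2 := intervalIntegral.integral_Iic_sub_Iic (integrable_pdf1.integrableOn (s := Set.Iic 0))
    (integrable_pdf1.integrableOn (s := Set.Iic y))
  have k1 := key y
  have k2 := key 0
  linarith [h2]

lemma hasDerivAt_gaussTail (x : ℝ) : HasDerivAt gaussTail (-(pdf1 x)) x := by
  have h1 : HasDerivAt (fun y => ∫ t in (0:ℝ)..y, pdf1 t) (pdf1 x) x :=
    (continuous_pdf1.integral_hasStrictDerivAt 0 x).hasDerivAt
  have h2 := (hasDerivAt_const x (gaussTail 0)).sub h1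
  have h3 : (fun y => gaussTail 0 - ∫ t in (0:ℝ)..y, pdf1 t) = gaussTail :=
    funext fun y => (gaussTail_sub y).symm
  have h2' : HasDerivAt (fun y => gaussTail 0 - ∫ t in (0:ℝ)..y, pdf1 t) (0 - pdf1 x) x := h2
  rw [h3] at h2'
  simpa using h2'

lemma continuous_gaussTail : Continuous gaussTail :=
  continuous_iff_continuousAt.2 fun x => (hasDerivAt_gaussTail x).continuousAt

lemma gaussTail_nonneg (x : ℝ) : 0 ≤ gaussTail x := ENNReal.toReal_nonneg

lemma gaussTail_le_one (x : ℝ) : gaussTail x ≤ 1 := by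
  have h1 : gaussianReal 0 1 {z : ℝ | x ≤ z} ≤ 1 := prob_le_one
  exact ENNReal.toReal_le_of_le_ofReal zero_le_one (by simpa using h1)

lemma mu_repr (lam h : ℝ) (h0 : 0 < lam) (h1 : lam < 1) :
    mu lam h = ∫ t in Set.Ici h,
      pdf1 t * gaussTail ((h - lam*t)/Real.sqrt (1 - lam^2)) := by
  set c : ℝ := Real.sqrt (1 - lam^2) with hc_def
  have hlam2 : 0 < 1 - lam^2 := by nlinarith
  have hc : 0 < c := Real.sqrt_pos.2 hlam2
  set γ : Measure ℝ := gaussianReal 0 1 with hγ_def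
  have hT : Measurable (fun z : ℝ × ℝ => (z.1, lam * z.1 + c * z.2)) :=
    measurable_fst.prodMk ((measurable_const.mul measurable_fst).add
      (measurable_const.mul measurable_snd))
  have hS : MeasurableSet {p : ℝ × ℝ | h ≤ p.1 ∧ h ≤ p.2} :=
    (measurableSet_le measurable_const measurable_fst).inter
      (measurableSet_le measurable_const measurable_snd)
  set A : Set (ℝ × ℝ) := (fun z : ℝ × ℝ => (z.1, lam * z.1 + c * z.2)) ⁻¹'
    {p : ℝ × ℝ | h ≤ p.1 ∧ h ≤ p.2} with hA_def
  have hA : MeasurableSet A := hT hS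
  have step1 : mu lam h = ((γ.prod γ) A).toReal := by
    rw [mu, gaussPair, Measure.map_apply hT hS]
  have step2 : (γ.prod γ) A = ∫⁻ t, γ (Prod.mk t ⁻¹' A) ∂γ := Measure.prod_apply hA
  have slice_eq : ∀ t : ℝ, (γ (Prod.mk t ⁻¹' A)).toReal
      = Set.indicator (Set.Ici h) (fun t => gaussTail ((h - lam*t)/c)) t := by
    intro t
    by_cases ht : h ≤ t
    · have hset : Prod.mk t ⁻¹' A = Set.Ici ((h - lam*t)/c) := by
        ext y
        simp only [hA_def, Set.mem_preimage, Set.mem_setOf_eq, Set.mem_Ici, ht, true_and]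
        rw [div_le_iff₀ hc]
        constructor <;> intro hy <;> nlinarith
      rw [hset, Set.indicator_of_mem (Set.mem_Ici.2 ht)]
      congr 1
    · have hset : Prod.mk t ⁻¹' A = ∅ := by
        ext y
        simp [hA_def, ht]
      rw [hset, Set.indicator_of_notMem (by simpa using ht)]
      simp
  have step3 : ((γ.prod γ) A).toReal = ∫ t, (γ (Prod.mk t ⁻¹' A)).toReal ∂γ := by
    rw [step2]
    exact (MeasureTheory.integral_toReal (measurable_measure_prodMk_left hA).aemeasurable
      (ae_of_all _ fun t => lt_of_le_of_lt prob_le_one ENNReal.one_lt_top)).symm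
  rw [step1, step3]
  rw [integral_congr_ae (ae_of_all _ slice_eq)]
  rw [MeasureTheory.integral_indicator measurableSet_Ici]
  -- now convert ∂γ to volume with density
  have hγd : γ = volume.withDensity (gaussianPDF 0 1) :=
    gaussianReal_of_var_ne_zero 0 one_ne_zero
  have hres : γ.restrict (Set.Ici h)
      = (volume.restrict (Set.Ici h)).withDensity (gaussianPDF 0 1) := by
    rw [hγd, MeasureTheory.restrict_withDensity measurableSet_Ici]
  rw [hres]
  have hpdf : gaussianPDF 0 1 = fun t => ((Real.toNNReal (pdf1 t) : ℝ≥0) : ℝ≥0∞) := rfl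
  rw [hpdf]
  rw [integral_withDensity_eq_integral_smul
    ((measurable_gaussianPDFReal 0 1).real_toNNReal) _]
  apply setIntegral_congr_fun measurableSet_Ici
  intro t _
  simp only [NNReal.smul_def, Real.coe_toNNReal _ (pdf1_nonneg t), smul_eq_mul]

def Qf (h s t : ℝ) : ℝ := (h - s*t)/Real.sqrt (1 - s^2)
def Df (h s t : ℝ) : ℝ := pdf1 (Qf h s t) * (t - s*h) / ((1-s^2) * Real.sqrt (1-s^2))
def fdens (h s : ℝ) : ℝ := (1/(2*Real.pi*Real.sqrt (1-s^2))) * Real.exp (-(h^2)/(1+s))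
def Mf (h s : ℝ) : ℝ := ∫ t in Set.Ici h, pdf1 t * gaussTail (Qf h s t)

lemma hasDerivAt_Qf (h t s : ℝ) (hs : s^2 < 1) :
    HasDerivAt (fun s => Qf h s t) ((s*h - t)/((1-s^2) * Real.sqrt (1-s^2))) s := by
  have h2 : 0 < 1 - s^2 := by linarith
  have hc : 0 < Real.sqrt (1-s^2) := Real.sqrt_pos.2 h2
  have hsq : Real.sqrt (1-s^2)^2 = 1-s^2 := Real.sq_sqrt h2.le
  have hnum : HasDerivAt (fun s : ℝ => h - s*t) (-t) s := by
    simpa using ((hasDerivAt_id s).mul_const t).const_sub h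
  have hinner : HasDerivAt (fun s : ℝ => 1 - s^2) (-(2*s)) s := by
    simpa using (hasDerivAt_pow 2 s).const_sub 1
  have hden : HasDerivAt (fun s : ℝ => Real.sqrt (1 - s^2))
      (1/(2*Real.sqrt (1-s^2)) * (-(2*s))) s :=
    (Real.hasDerivAt_sqrt (ne_of_gt h2)).comp s hinner
  have hdiv := hnum.div hden (ne_of_gt hc)
  refine hdiv.congr_deriv ?_
  symm
  rw [div_eq_div_iff (by positivity) (by positivity)]
  field_simp
  linear_combination (s*h - s^2*t) * hsq

lemma hasDerivAt_G (h t s : ℝ) (hs : s^2 < 1) :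
    HasDerivAt (fun s => gaussTail (Qf h s t)) (Df h s t) s := by
  have := (hasDerivAt_gaussTail (Qf h s t)).comp s (hasDerivAt_Qf h t s hs)
  refine this.congr_deriv ?_
  symm
  unfold Df
  ring

set_option maxHeartbeats 1000000 in
lemma hasDerivAt_Mf (h s : ℝ) (hs0 : 0 < s) (hs1 : s < 1) :
    IntegrableOn (fun t => pdf1 t * Df h s t) (Set.Ici h) volume ∧
    HasDerivAt (Mf h) (∫ t in Set.Ici h, pdf1 t * Df h s t) s := by
  set b : ℝ := (1+s)/2 with hb_def
  have hb1 : b < 1 := by rw [hb_def]; linarith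
  have hb0 : 0 < b := by rw [hb_def]; linarith
  have hbsq : 0 < 1 - b^2 := by nlinarith
  set ε : ℝ := min (s/2) ((1-s)/2) with hε_def
  have hεpos : 0 < ε := lt_min (by linarith) (by linarith)
  have hball : ∀ x ∈ Metric.ball s ε, s/2 ≤ x ∧ x ≤ b := by
    intro x hx
    rw [Metric.mem_ball, Real.dist_eq, abs_sub_lt_iff] at hx
    have h1 := hx.1; have h2 := hx.2
    have e1 : ε ≤ s/2 := min_le_left _ _
    have e2 : ε ≤ (1-s)/2 := min_le_right _ _
    constructor
    · linarith
    · rw [hb_def]; linarith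
  set C : ℝ := ((1-b^2) * Real.sqrt (1-b^2))⁻¹ * (Real.sqrt (2*Real.pi))⁻¹ with hC_def
  have hCpos : 0 < C := by positivity
  set bound : ℝ → ℝ := fun t => C * (pdf1 t * (|t| + |h|)) with hbound_def
  have hbound_int : IntegrableOn bound (Set.Ici h) volume := by
    have h1 : Integrable (fun t : ℝ => |t| * Real.exp (-(1/2) * t^2)) := by
      have h0 : Integrable (fun t : ℝ => t * Real.exp (-(2⁻¹ * t^2))) := by
        have := integrable_rpow_mul_exp_neg_mul_sq (by norm_num : (0:ℝ) < 1/2)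
          (by norm_num : (-1:ℝ) < 1)
        simpa using this
      have := h0.abs
      refine this.congr ?_
      refine Eventually.of_forall fun t => ?_
      show |t * Real.exp (-(2⁻¹ * t ^ 2))| = |t| * Real.exp (-(1/2) * t^2)
      rw [abs_mul, abs_of_pos (Real.exp_pos _)]
      norm_num
    have h2 : Integrable (fun t : ℝ => pdf1 t * |t|) := by
      have : (fun t : ℝ => pdf1 t * |t|)
          = fun t => (Real.sqrt (2*Real.pi))⁻¹ * (|t| * Real.exp (-(1/2) * t^2)) := by
        funext t
        rw [pdf1_eq]
        rw [show -(t^2)/2 = -(1/2) * t^2 by ring]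
        ring
      rw [this]
      exact h1.const_mul _
    have h3 : Integrable (fun t : ℝ => pdf1 t * |h|) := integrable_pdf1.mul_const _
    have h4 : Integrable (fun t : ℝ => pdf1 t * (|t| + |h|)) := by
      have : (fun t : ℝ => pdf1 t * (|t| + |h|))
          = fun t => pdf1 t * |t| + pdf1 t * |h| := by funext t; ring
      rw [this]; exact h2.add h3
    exact ((h4.const_mul C).integrableOn)
  have hF_meas : ∀ᶠ x in 𝓝 s, AEStronglyMeasurable
      (fun t => pdf1 t * gaussTail (Qf h x t)) (volume.restrict (Set.Ici h)) := by
    refine Eventually.of_forall fun x => ?_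
    refine (continuous_pdf1.mul (continuous_gaussTail.comp ?_)).aestronglyMeasurable
    unfold Qf
    exact (continuous_const.sub (continuous_const.mul continuous_id)).div_const _
  have hF_int : Integrable (fun t => pdf1 t * gaussTail (Qf h s t))
      (volume.restrict (Set.Ici h)) := by
    refine Integrable.mono (integrable_pdf1.integrableOn)
      ((continuous_pdf1.mul (continuous_gaussTail.comp
        ((continuous_const.sub (continuous_const.mul continuous_id)).div_const _))).aestronglyMeasurable)
      (Eventually.of_forall fun t => ?_)
    rw [Real.norm_eq_abs, Real.norm_eq_abs,
      abs_of_nonneg (mul_nonneg (pdf1_nonneg t) (gaussTail_nonneg _)),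
      abs_of_nonneg (pdf1_nonneg t)]
    calc pdf1 t * gaussTail (Qf h s t) ≤ pdf1 t * 1 :=
          mul_le_mul_of_nonneg_left (gaussTail_le_one _) (pdf1_nonneg t)
      _ = pdf1 t := mul_one _
  have hF'_meas : AEStronglyMeasurable (fun t => pdf1 t * Df h s t)
      (volume.restrict (Set.Ici h)) := by
    refine Continuous.aestronglyMeasurable ?_
    unfold Df Qf
    exact continuous_pdf1.mul ((((continuous_pdf1.comp
      ((continuous_const.sub (continuous_const.mul continuous_id)).div_const _)).mul
      ((continuous_id.sub continuous_const))).div_const _))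
  have h_bound : ∀ᵐ t ∂(volume.restrict (Set.Ici h)), ∀ x ∈ Metric.ball s ε,
      ‖pdf1 t * Df h x t‖ ≤ bound t := by
    refine Eventually.of_forall fun t x hx => ?_
    obtain ⟨hx1, hx2⟩ := hball x hx
    have hx0 : 0 < x := lt_of_lt_of_le (by linarith) hx1
    have hxb : 0 < 1 - x^2 := by nlinarith
    have hxb2 : 1 - b^2 ≤ 1 - x^2 := by nlinarith
    rw [Real.norm_eq_abs]
    have expand : pdf1 t * Df h x t
        = pdf1 t * pdf1 (Qf h x t) * (t - x*h) / ((1-x^2) * Real.sqrt (1-x^2)) := by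
      unfold Df; ring
    rw [expand, abs_div, abs_mul, abs_mul,
      abs_of_nonneg (pdf1_nonneg t), abs_of_nonneg (pdf1_nonneg _),
      abs_of_nonneg (le_of_lt (by positivity : (0:ℝ) < (1-x^2) * Real.sqrt (1-x^2)))]
    rw [hbound_def, hC_def]
    have key1 : pdf1 t * pdf1 (Qf h x t) * |t - x*h|
        ≤ pdf1 t * (Real.sqrt (2*Real.pi))⁻¹ * (|t| + |h|) := by
      have e1 : |t - x*h| ≤ |t| + |h| := by
        calc |t - x*h| ≤ |t| + |x*h| := abs_sub _ _
          _ ≤ |t| + |h| := by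
              rw [abs_mul]
              have : |x| ≤ 1 := by rw [abs_of_pos hx0]; linarith
              nlinarith [abs_nonneg h, abs_nonneg (x*h)]
      have e2 : pdf1 (Qf h x t) ≤ (Real.sqrt (2*Real.pi))⁻¹ := pdf1_le _
      have p1 := pdf1_nonneg t
      have p2 := pdf1_nonneg (Qf h x t)
      have p3 := abs_nonneg (t - x*h)
      calc pdf1 t * pdf1 (Qf h x t) * |t - x*h|
          ≤ (pdf1 t * (Real.sqrt (2*Real.pi))⁻¹) * (|t| + |h|) := by
            refine mul_le_mul (mul_le_mul_of_nonneg_left e2 p1) e1 p3 ?_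
            exact mul_nonneg p1 (by positivity)
        _ = pdf1 t * (Real.sqrt (2*Real.pi))⁻¹ * (|t| + |h|) := rfl
    have key2 : (1-b^2) * Real.sqrt (1-b^2) ≤ (1-x^2) * Real.sqrt (1-x^2) := by
      have := Real.sqrt_le_sqrt hxb2
      nlinarith [Real.sqrt_nonneg (1-b^2), Real.sqrt_pos.2 hbsq]
    calc pdf1 t * pdf1 (Qf h x t) * |t - x*h| / ((1-x^2) * Real.sqrt (1-x^2))
        ≤ pdf1 t * (Real.sqrt (2*Real.pi))⁻¹ * (|t| + |h|) / ((1-b^2) * Real.sqrt (1-b^2)) := by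
          refine div_le_div₀ (mul_nonneg (mul_nonneg (pdf1_nonneg t) (by positivity)) (by positivity)) key1 (by positivity) key2
      _ = ((1-b^2) * Real.sqrt (1-b^2))⁻¹ * (Real.sqrt (2*Real.pi))⁻¹ * (pdf1 t * (|t| + |h|)) := by
          ring
  have h_diff : ∀ᵐ t ∂(volume.restrict (Set.Ici h)), ∀ x ∈ Metric.ball s ε,
      HasDerivAt (fun x => pdf1 t * gaussTail (Qf h x t)) (pdf1 t * Df h x t) x := by
    refine Eventually.of_forall fun t x hx => ?_
    obtain ⟨hx1, hx2⟩ := hball x hx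
    have hx0 : 0 < x := lt_of_lt_of_le (by linarith) hx1
    have hxsq : x^2 < 1 := by nlinarith
    exact (hasDerivAt_G h t x hxsq).const_mul (pdf1 t)
  have := hasDerivAt_integral_of_dominated_loc_of_deriv_le
    (μ := volume.restrict (Set.Ici h)) (x₀ := s)
    (F := fun x t => pdf1 t * gaussTail (Qf h x t))
    (F' := fun x t => pdf1 t * Df h x t) (bound := bound)
    (Metric.ball_mem_nhds s hεpos) hF_meas hF_int hF'_meas h_bound hbound_int h_diff
  exact ⟨this.1, this.2⟩

lemma pdf1_mul_pdf1 (h s t : ℝ) (h2 : 0 < 1 - s^2) :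
    pdf1 t * pdf1 (Qf h s t)
      = (2*Real.pi)⁻¹ * Real.exp (-((t - s*h)^2 + h^2*(1-s^2))/(2*(1-s^2))) := by
  have hQsq : (Qf h s t)^2 = (h - s*t)^2/(1-s^2) := by
    unfold Qf; rw [div_pow, Real.sq_sqrt h2.le]
  rw [pdf1_eq, pdf1_eq, hQsq]
  have hconst : (Real.sqrt (2*Real.pi))⁻¹ * (Real.sqrt (2*Real.pi))⁻¹ = (2*Real.pi)⁻¹ := by
    rw [← mul_inv, Real.mul_self_sqrt (by positivity)]
  have hexp : Real.exp (-(t^2)/2) * Real.exp (-((h - s*t)^2/(1-s^2))/2)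
      = Real.exp (-((t - s*h)^2 + h^2*(1-s^2))/(2*(1-s^2))) := by
    rw [← Real.exp_add]
    congr 1
    field_simp
    ring
  calc (Real.sqrt (2*Real.pi))⁻¹ * Real.exp (-(t^2)/2) *
        ((Real.sqrt (2*Real.pi))⁻¹ * Real.exp (-((h - s*t)^2/(1-s^2))/2))
      = ((Real.sqrt (2*Real.pi))⁻¹ * (Real.sqrt (2*Real.pi))⁻¹) *
        (Real.exp (-(t^2)/2) * Real.exp (-((h - s*t)^2/(1-s^2))/2)) := by ring
    _ = (2*Real.pi)⁻¹ * Real.exp (-((t - s*h)^2 + h^2*(1-s^2))/(2*(1-s^2))) := by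
        rw [hconst, hexp]

lemma integral_D (h s : ℝ) (hs0 : 0 < s) (hs1 : s < 1)
    (hint : IntegrableOn (fun t => pdf1 t * Df h s t) (Set.Ici h) volume) :
    ∫ t in Set.Ici h, pdf1 t * Df h s t = fdens h s := by
  have h2 : 0 < 1 - s^2 := by nlinarith
  have hc : 0 < Real.sqrt (1-s^2) := Real.sqrt_pos.2 h2
  set K : ℝ := 1/(2*Real.pi*Real.sqrt (1-s^2)) with hK_def
  set FF : ℝ → ℝ := fun t => -K * Real.exp (-((t - s*h)^2 + h^2*(1-s^2))/(2*(1-s^2)))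
    with hFF_def
  have hderiv : ∀ t : ℝ, HasDerivAt FF (pdf1 t * Df h s t) t := by
    intro t
    have hu : HasDerivAt (fun t : ℝ => -((t - s*h)^2 + h^2*(1-s^2))/(2*(1-s^2)))
        ((s*h - t)/(1-s^2)) t := by
      have hin : HasDerivAt (fun t : ℝ => (t - s*h)^2 + h^2*(1-s^2)) (2*(t - s*h)) t := by
        have := (((hasDerivAt_id t).sub_const (s*h)).pow 2).add_const (h^2*(1-s^2))
        simpa using this
      have := (hin.neg).div_const (2*(1-s^2))
      refine this.congr_deriv ?_
      symm
      field_simp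
      ring
    have hexp := hu.exp
    have := hexp.const_mul (-K)
    refine this.congr_deriv ?_
    symm
    unfold Df
    rw [show pdf1 t * (pdf1 (Qf h s t) * (t - s*h) / ((1-s^2) * Real.sqrt (1-s^2)))
      = (pdf1 t * pdf1 (Qf h s t)) * ((t - s*h) / ((1-s^2) * Real.sqrt (1-s^2))) by ring]
    rw [pdf1_mul_pdf1 h s t h2, hK_def]
    have hsq : Real.sqrt (1-s^2) * Real.sqrt (1-s^2) = 1-s^2 :=
      Real.mul_self_sqrt h2.le
    field_simp
    ring_nf
  have htend : Tendsto FF atTop (𝓝 0) := by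
    have h3 : Tendsto (fun t : ℝ => (t - s*h)^2) atTop atTop :=
      (tendsto_pow_atTop two_ne_zero).comp (tendsto_atTop_add_const_right _ _ tendsto_id)
    have h4 : Tendsto (fun t : ℝ => (t - s*h)^2 + h^2*(1-s^2)) atTop atTop :=
      tendsto_atTop_add_const_right _ _ h3
    have h5 : Tendsto (fun t : ℝ => -((t - s*h)^2 + h^2*(1-s^2))/(2*(1-s^2))) atTop atBot := by
      apply Tendsto.atBot_div_const (by positivity)
      exact tendsto_neg_atTop_atBot.comp h4
    have h6 : Tendsto (fun t : ℝ => Real.exp (-((t - s*h)^2 + h^2*(1-s^2))/(2*(1-s^2))))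
        atTop (𝓝 0) := Real.tendsto_exp_atBot.comp h5
    have h7 := h6.const_mul (-K)
    rw [mul_zero] at h7
    exact h7
  have key : ∫ t in Set.Ioi h, pdf1 t * Df h s t = 0 - FF h := by
    refine integral_Ioi_of_hasDerivAt_of_tendsto' (fun t _ => hderiv t) ?_ htend
    exact hint.mono_set Set.Ioi_subset_Ici_self
  rw [MeasureTheory.integral_Ici_eq_integral_Ioi, key, hFF_def]
  simp only []
  have harg : -((h - s*h)^2 + h^2*(1-s^2))/(2*(1-s^2)) = -(h^2)/(1+s) := by
    rw [div_eq_div_iff (by positivity) (ne_of_gt (by linarith : (0:ℝ) < 1+s))]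
    ring
  rw [harg]
  unfold fdens
  rw [hK_def]
  ring

lemma fdens_continuousOn (h ρ' ρ : ℝ) (h0 : 0 < ρ') (h1 : ρ < 1) (hle : ρ' ≤ ρ) :
    ContinuousOn (fdens h) (Set.uIcc ρ' ρ) := by
  rw [Set.uIcc_of_le hle]
  have hsub : Set.Icc ρ' ρ ⊆ {s : ℝ | 0 < s ∧ s < 1} := fun s hs =>
    ⟨lt_of_lt_of_le h0 hs.1, lt_of_le_of_lt hs.2 h1⟩
  unfold fdens
  apply ContinuousOn.mul
  · apply ContinuousOn.div continuousOn_const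
    · exact (continuous_const.mul (Real.continuous_sqrt.comp
        (continuous_const.sub (continuous_pow 2)))).continuousOn
    · intro s hs
      obtain ⟨hs0, hs1⟩ := hsub hs
      have : 0 < 1 - s^2 := by nlinarith
      positivity
  · apply Real.continuous_exp.comp_continuousOn
    apply ContinuousOn.div continuousOn_const
    · exact (continuous_const.add continuous_id).continuousOn
    · intro s hs
      obtain ⟨hs0, hs1⟩ := hsub hs
      positivity

lemma fdens_intervalIntegrable (h ρ' ρ : ℝ) (h0 : 0 < ρ') (h1 : ρ < 1) (hle : ρ' ≤ ρ) :
    IntervalIntegrable (fdens h) volume ρ' ρ :=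
  (fdens_continuousOn h ρ' ρ h0 h1 hle).intervalIntegrable

lemma Mf_diff (h ρ' ρ : ℝ) (h0 : 0 < ρ') (hle : ρ' ≤ ρ) (h1 : ρ < 1) :
    Mf h ρ - Mf h ρ' = ∫ s in ρ'..ρ, fdens h s := by
  have key : ∀ s ∈ Set.uIcc ρ' ρ, HasDerivAt (Mf h) (fdens h s) s := by
    intro s hs
    rw [Set.uIcc_of_le hle] at hs
    have hs0 : 0 < s := lt_of_lt_of_le h0 hs.1
    have hs1 : s < 1 := lt_of_le_of_lt hs.2 h1
    obtain ⟨hint, hD⟩ := hasDerivAt_Mf h s hs0 hs1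
    rwa [integral_D h s hs0 hs1 hint] at hD
  rw [intervalIntegral.integral_eq_sub_of_hasDerivAt key
    (fdens_intervalIntegrable h ρ' ρ h0 h1 hle)]

lemma fdens_pos (h s : ℝ) (hs0 : 0 < s) (hs1 : s < 1) : 0 < fdens h s := by
  have h2 : 0 < 1 - s^2 := by nlinarith
  unfold fdens
  positivity

lemma fdens_upper (h s lam : ℝ) (hs0 : 0 < s) (hsl : s ≤ lam) (hl1 : lam < 1) :
    fdens h s ≤ fdens h lam := by
  have h2l : 0 < 1 - lam^2 := by nlinarith
  have h2s : 0 < 1 - s^2 := by nlinarith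
  have e1 : 1/(2*Real.pi*Real.sqrt (1-s^2)) ≤ 1/(2*Real.pi*Real.sqrt (1-lam^2)) := by
    apply one_div_le_one_div_of_le (by positivity)
    have : Real.sqrt (1-lam^2) ≤ Real.sqrt (1-s^2) := Real.sqrt_le_sqrt (by nlinarith)
    nlinarith [Real.pi_pos]
  have e2 : Real.exp (-(h^2)/(1+s)) ≤ Real.exp (-(h^2)/(1+lam)) := by
    apply Real.exp_le_exp.2
    rw [neg_div, neg_div, neg_le_neg_iff]
    apply div_le_div_of_nonneg_left (sq_nonneg h) (by linarith) (by linarith)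
  unfold fdens
  have p1 : 0 < 1/(2*Real.pi*Real.sqrt (1-s^2)) := by positivity
  nlinarith [Real.exp_pos (-(h^2)/(1+s)), Real.exp_pos (-(h^2)/(1+lam))]

lemma fdens_lower (h lam eps s : ℝ) (hl1 : lam < 1) (he : 0 < eps)
    (hs : lam - eps ≤ s) (hsl : s ≤ lam) (hse : 0 < lam - eps) :
    Real.sqrt ((1-lam^2)/((1-lam^2)+2*eps)) * Real.exp (-(h^2) * eps) * fdens h lam
      ≤ fdens h s := by
  have hl0 : 0 < lam := lt_trans hse (by linarith)
  have hs0 : 0 < s := lt_of_lt_of_le hse hs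
  have h2l : 0 < 1 - lam^2 := by nlinarith
  have h2s : 0 < 1 - s^2 := by nlinarith
  set X : ℝ := (1-lam^2) + 2*eps with hX_def
  have hX : 0 < X := by positivity
  have heq : Real.sqrt ((1-lam^2)/X) * Real.exp (-(h^2) * eps) * fdens h lam
      = (1/(2*Real.pi*Real.sqrt X)) * Real.exp (-(h^2)/(1+lam) + -(h^2) * eps) := by
    unfold fdens
    rw [Real.sqrt_div h2l.le, Real.exp_add]
    have hs1 : Real.sqrt (1-lam^2) ≠ 0 := ne_of_gt (Real.sqrt_pos.2 h2l)
    have hs2 : Real.sqrt X ≠ 0 := ne_of_gt (Real.sqrt_pos.2 hX)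
    field_simp
  rw [heq]
  have e1 : 1/(2*Real.pi*Real.sqrt X) ≤ 1/(2*Real.pi*Real.sqrt (1-s^2)) := by
    apply one_div_le_one_div_of_le (by positivity)
    have hle2 : 1 - s^2 ≤ X := by rw [hX_def]; nlinarith
    have : Real.sqrt (1-s^2) ≤ Real.sqrt X := Real.sqrt_le_sqrt hle2
    nlinarith [Real.pi_pos]
  have e2 : Real.exp (-(h^2)/(1+lam) + -(h^2) * eps) ≤ Real.exp (-(h^2)/(1+s)) := by
    apply Real.exp_le_exp.2
    have key : h^2/(1+s) ≤ h^2/(1+lam) + h^2 * eps := by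
      have d1 : 0 < 1 + s := by linarith
      have d2 : 0 < 1 + lam := by linarith
      rw [div_add' _ _ _ (ne_of_gt d2), div_le_div_iff₀ d1 d2]
      have expand : (h^2 + h^2*eps*(1+lam)) * (1+s) - h^2 * (1+lam)
          = h^2 * ((s - lam) + eps*(1+lam)*(1+s)) := by ring
      have k1 : h^2 * (-eps) ≤ h^2 * (s - lam) :=
        mul_le_mul_of_nonneg_left (by linarith) (sq_nonneg h)
      have k2 : h^2 * (eps * 1) ≤ h^2 * (eps * ((1+lam)*(1+s))) := by
        apply mul_le_mul_of_nonneg_left ?_ (sq_nonneg h)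
        apply mul_le_mul_of_nonneg_left ?_ he.le
        nlinarith
      nlinarith [k1, k2, expand]
    rw [neg_div, neg_div]
    linarith
  unfold fdens
  calc 1/(2*Real.pi*Real.sqrt X) * Real.exp (-(h^2)/(1+lam) + -(h^2) * eps)
      ≤ 1/(2*Real.pi*Real.sqrt (1-s^2)) * Real.exp (-(h^2)/(1+s)) := by
        apply mul_le_mul e1 e2 (le_of_lt (Real.exp_pos _)) (by positivity)

lemma fdens_def (h s : ℝ) :
    fdens h s = (1/(2*Real.pi*Real.sqrt (1-s^2))) * Real.exp (-(h^2)/(1+s)) := rfl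

lemma mu_diff' (h ρ' ρ : ℝ) (h0 : 0 < ρ') (hle : ρ' ≤ ρ) (h1 : ρ < 1) :
    mu ρ h - mu ρ' h = ∫ s in ρ'..ρ, fdens h s := by
  rw [mu_repr ρ h (lt_of_lt_of_le h0 hle) h1, mu_repr ρ' h h0 (lt_of_le_of_lt hle h1)]
  exact Mf_diff h ρ' ρ h0 hle h1

lemma tendsto_rpow_neg_nat {a : ℝ} (ha : 0 < a) :
    Tendsto (fun m : ℕ => (m:ℝ)^(-a)) atTop (𝓝 0) :=
  (tendsto_rpow_neg_atTop ha).comp tendsto_natCast_atTop_atTop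

lemma tendsto_log_mul_rpow_neg {a : ℝ} (ha : 0 < a) :
    Tendsto (fun m : ℕ => Real.log m * (m:ℝ)^(-a)) atTop (𝓝 0) := by
  have h1 : Tendsto (fun x : ℝ => Real.log x / x^a) atTop (𝓝 0) :=
    (isLittleO_log_rpow_atTop ha).tendsto_div_nhds_zero
  have h2 := h1.comp (tendsto_natCast_atTop_atTop (R := ℝ))
  apply h2.congr'
  filter_upwards [eventually_ge_atTop 1] with m hm
  have hm0 : (0:ℝ) < (m:ℝ) := by positivity
  simp only [Function.comp]
  rw [Real.rpow_neg hm0.le, div_eq_mul_inv]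


/-- first-order approximation of `μ_m(λ) - μ_m(λ - ε_m)`. -/
theorem stmt18 (r : ℝ) (hr : r ∈ Set.Ioo (0 : ℝ) 1)
    (lam : ℝ) (hlam : lam ∈ Set.Ioo (2 * r - 1) 1) (hlam0 : 0 < lam)
    (eta : ℝ) (heta : 0 < eta) :
    Asymptotics.IsEquivalent atTop
      (fun m : ℕ => muM r m lam - muM r m (lam - epsm r lam eta m))
      (fun m : ℕ => epsm r lam eta m * (1 / (2 * Real.pi * Real.sqrt (1 - lam ^ 2))) *
        Real.exp (-(hthr r m) ^ 2 / (1 + lam))) := by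
  obtain ⟨hr0, hr1⟩ := hr
  obtain ⟨hlamr, hlam1⟩ := hlam
  have hlam2 : 0 < 1 - lam^2 := by nlinarith
  set a : ℝ := (lam - (2*r-1))/(2*(1+lam)) with ha_def
  have ha : 0 < a := by
    apply div_pos (by linarith) (by linarith)
  set Kc : ℝ := Real.sqrt (2*Real.pi) * (1+lam) * (1-lam^2)^((1:ℝ)/4) * eta with hKc_def
  have hKc : 0 < Kc := by
    have : (0:ℝ) < (1-lam^2)^((1:ℝ)/4) := Real.rpow_pos_of_pos hlam2 _
    positivity
  have hepsm_eq : ∀ m : ℕ, epsm r lam eta m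
      = Kc / Real.sqrt (2*r*Real.log m) * (m:ℝ)^(-a) := by
    intro m
    rw [epsm, hKc_def, ha_def, neg_div]
  -- positivity of epsm for m ≥ 2
  have hlog : ∀ m : ℕ, 2 ≤ m → 0 < Real.log m := by
    intro m hm
    apply Real.log_pos
    exact_mod_cast Nat.lt_of_lt_of_le Nat.one_lt_two hm
  have hepos : ∀ m : ℕ, 2 ≤ m → 0 < epsm r lam eta m := by
    intro m hm
    rw [hepsm_eq]
    have h1 := hlog m hm
    have hm0 : (0:ℝ) < (m:ℝ) := by positivity
    have : (0:ℝ) < (m:ℝ)^(-a) := Real.rpow_pos_of_pos hm0 _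
    positivity
  -- upper bound for epsm
  have hC2 : (0:ℝ) < Real.sqrt (2*r*Real.log 2) := by
    apply Real.sqrt_pos.2
    have := Real.log_pos (by norm_num : (1:ℝ) < 2)
    positivity
  have hebound : ∀ m : ℕ, 2 ≤ m →
      epsm r lam eta m ≤ Kc / Real.sqrt (2*r*Real.log 2) * (m:ℝ)^(-a) := by
    intro m hm
    rw [hepsm_eq]
    have hm0 : (0:ℝ) < (m:ℝ)^(-a) := Real.rpow_pos_of_pos (by positivity) _
    apply mul_le_mul_of_nonneg_right _ hm0.le
    apply div_le_div_of_nonneg_left hKc.le hC2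
    apply Real.sqrt_le_sqrt
    have h2m : Real.log 2 ≤ Real.log m := by
      apply Real.log_le_log (by norm_num)
      exact_mod_cast hm
    nlinarith
  -- epsm tends to 0
  have heps0 : Tendsto (fun m : ℕ => epsm r lam eta m) atTop (𝓝 0) := by
    have hub := (tendsto_rpow_neg_nat ha).const_mul (Kc / Real.sqrt (2*r*Real.log 2))
    rw [mul_zero] at hub
    refine tendsto_of_tendsto_of_tendsto_of_le_of_le' tendsto_const_nhds hub ?_ ?_
    · filter_upwards [eventually_ge_atTop 2] with m hm
      exact (hepos m hm).le
    · filter_upwards [eventually_ge_atTop 2] with m hm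
      exact hebound m hm
  have hsq : ∀ m : ℕ, 1 ≤ m → (hthr r m)^2 = 2*r*Real.log m := by
    intro m hm
    rw [hthr, Real.sq_sqrt]
    have h1 : (1:ℝ) ≤ (m:ℝ) := by exact_mod_cast hm
    have h2 := Real.log_nonneg h1
    positivity
  have hh2eps : Tendsto (fun m : ℕ => (hthr r m)^2 * epsm r lam eta m) atTop (𝓝 0) := by
    set C : ℝ := 2*r*(Kc / Real.sqrt (2*r*Real.log 2)) with hC
    have hub := (tendsto_log_mul_rpow_neg ha).const_mul C
    rw [mul_zero] at hub
    refine tendsto_of_tendsto_of_tendsto_of_le_of_le' tendsto_const_nhds hub ?_ ?_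
    · filter_upwards [eventually_ge_atTop 2] with m hm
      exact mul_nonneg (sq_nonneg _) (hepos m hm).le
    · filter_upwards [eventually_ge_atTop 2] with m hm
      rw [hsq m (le_trans one_le_two hm), hepsm_eq m]
      have hm0 : (0:ℝ) < (m:ℝ)^(-a) := Real.rpow_pos_of_pos (by positivity) _
      have hlm := hlog m hm
      have key : Kc / Real.sqrt (2*r*Real.log m) ≤ Kc / Real.sqrt (2*r*Real.log 2) := by
        apply div_le_div_of_nonneg_left hKc.le hC2
        apply Real.sqrt_le_sqrt
        have h2m : Real.log 2 ≤ Real.log m := by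
          apply Real.log_le_log (by norm_num)
          exact_mod_cast hm
        nlinarith
      calc 2*r*Real.log m * (Kc / Real.sqrt (2*r*Real.log m) * (m:ℝ)^(-a))
          = (Kc / Real.sqrt (2*r*Real.log m)) * (2*r*Real.log m * (m:ℝ)^(-a)) := by ring
        _ ≤ (Kc / Real.sqrt (2*r*Real.log 2)) * (2*r*Real.log m * (m:ℝ)^(-a)) := by
            apply mul_le_mul_of_nonneg_right key
            have : 0 ≤ Real.log m := hlm.le
            positivity
        _ = C * (Real.log m * (m:ℝ)^(-a)) := by rw [hC]; ring
  set Am : ℕ → ℝ := fun m =>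
    Real.sqrt ((1-lam^2)/((1-lam^2)+2*epsm r lam eta m)) *
      Real.exp (-((hthr r m)^2) * epsm r lam eta m) with hAm_def
  have hAm1 : Tendsto Am atTop (𝓝 1) := by
    have t1 : Tendsto (fun m : ℕ =>
        Real.sqrt ((1-lam^2)/((1-lam^2)+2*epsm r lam eta m))) atTop (𝓝 1) := by
      have c1 : ContinuousAt (fun e : ℝ => Real.sqrt ((1-lam^2)/((1-lam^2)+2*e))) 0 := by
        apply Real.continuous_sqrt.continuousAt.comp
        apply ContinuousAt.div continuousAt_const (by fun_prop)
        simp only [mul_zero, add_zero]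
        exact ne_of_gt hlam2
      have h2 := c1.tendsto.comp heps0
      have h3 : Real.sqrt ((1-lam^2)/((1-lam^2)+2*(0:ℝ))) = 1 := by
        rw [mul_zero, add_zero, div_self (ne_of_gt hlam2), Real.sqrt_one]
      rw [h3] at h2
      exact h2
    have t2 : Tendsto (fun m : ℕ =>
        Real.exp (-((hthr r m)^2) * epsm r lam eta m)) atTop (𝓝 1) := by
      have h4 := hh2eps.neg
      rw [neg_zero] at h4
      have h5 := (Real.continuous_exp.tendsto 0).comp h4
      rw [Real.exp_zero] at h5
      apply h5.congr
      intro m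
      simp only [Function.comp]
      congr 1
      ring
    have := t1.mul t2
    rw [mul_one] at this
    exact this
  have hev_small : ∀ᶠ m : ℕ in atTop, epsm r lam eta m < lam/2 :=
    heps0.eventually_lt_const (by linarith)
  refine (Asymptotics.isEquivalent_iff_tendsto_one ?_).2 ?_
  · filter_upwards [eventually_ge_atTop 2] with m hm
    have h1 := hepos m hm
    have h2 : (0:ℝ) < Real.exp (-(hthr r m)^2/(1+lam)) := Real.exp_pos _
    have h3 : (0:ℝ) < 1/(2*Real.pi*Real.sqrt (1-lam^2)) := by positivity
    exact ne_of_gt (mul_pos (mul_pos h1 h3) h2)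
  · have hvR : ∀ m : ℕ, epsm r lam eta m * (1 / (2*Real.pi*Real.sqrt (1-lam^2))) *
        Real.exp (-(hthr r m)^2/(1+lam)) = epsm r lam eta m * fdens (hthr r m) lam := by
      intro m
      rw [fdens_def]
      ring
    refine tendsto_of_tendsto_of_tendsto_of_le_of_le' hAm1 tendsto_const_nhds ?_ ?_
    · filter_upwards [eventually_ge_atTop 2, hev_small] with m hm hsm
      set h : ℝ := hthr r m
      set ε : ℝ := epsm r lam eta m with hε_def
      have hε := hepos m hm
      have hle1 : 0 < lam - ε := by linarith
      have hu_eq : muM r m lam - muM r m (lam - ε)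
          = ∫ s in (lam - ε)..lam, fdens h s := by
        exact mu_diff' h (lam - ε) lam hle1 (by linarith) hlam1
      have hfpos := fdens_pos h lam hlam0 hlam1
      have hv_pos : 0 < ε * fdens h lam := mul_pos hε hfpos
      have hlo : Am m * (ε * fdens h lam) ≤ muM r m lam - muM r m (lam - ε) := by
        rw [hu_eq]
        have hmono := intervalIntegral.integral_mono_on (by linarith : lam - ε ≤ lam)
          (intervalIntegrable_const (c := Am m * fdens h lam))
          (fdens_intervalIntegrable h (lam - ε) lam hle1 hlam1 (by linarith))
          (fun s hs => by
            have := fdens_lower h lam ε s hlam1 hε hs.1 hs.2 hle1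
            calc Am m * fdens h lam
                = Real.sqrt ((1-lam^2)/((1-lam^2)+2*ε)) *
                  Real.exp (-(h^2) * ε) * fdens h lam := by rw [hAm_def]
              _ ≤ fdens h s := this)
        rw [intervalIntegral.integral_const] at hmono
        calc Am m * (ε * fdens h lam) = (lam - (lam - ε)) • (Am m * fdens h lam) := by
              rw [smul_eq_mul]; ring
          _ ≤ _ := hmono
      rw [Pi.div_apply, hvR m]
      exact (le_div_iff₀ hv_pos).2 hlo
    · filter_upwards [eventually_ge_atTop 2, hev_small] with m hm hsm
      set h : ℝ := hthr r m
      set ε : ℝ := epsm r lam eta m with hε_def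
      have hε := hepos m hm
      have hle1 : 0 < lam - ε := by linarith
      have hu_eq : muM r m lam - muM r m (lam - ε)
          = ∫ s in (lam - ε)..lam, fdens h s := by
        exact mu_diff' h (lam - ε) lam hle1 (by linarith) hlam1
      have hfpos := fdens_pos h lam hlam0 hlam1
      have hv_pos : 0 < ε * fdens h lam := mul_pos hε hfpos
      have hup : muM r m lam - muM r m (lam - ε) ≤ ε * fdens h lam := by
        rw [hu_eq]
        have hmono := intervalIntegral.integral_mono_on (by linarith : lam - ε ≤ lam)
          (fdens_intervalIntegrable h (lam - ε) lam hle1 hlam1 (by linarith))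
          (intervalIntegrable_const (c := fdens h lam))
          (fun s hs => fdens_upper h s lam (by
            have := hs.1; linarith) hs.2 hlam1)
        rw [intervalIntegral.integral_const] at hmono
        calc (∫ s in (lam - ε)..lam, fdens h s)
            ≤ (lam - (lam - ε)) • fdens h lam := hmono
          _ = ε * fdens h lam := by rw [smul_eq_mul]; ring
      rw [Pi.div_apply, hvR m]
      exact (div_le_one hv_pos).2 hup


end
end
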